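/- arXiv:math/0608732 — 12 statements merged into one kernel-verified Lean document; each statement's English description precedes it below -/
import Mathlib

section
/- Let Y = (1/q)Z be an n×n rational orthogonal matrix, where q is a positive integer and Z is an integer matrix with gcd of its nonzero entries equal to 1. If q_1 | q_2 | ... | q_n are the diagonal elements of the Smith normal form of Z, then q_i · q_{n-i+1} = q² for all i = 1,...,n. -/
/-!
Since `Z Zᵀ = q² I`, the matrix `E = Q⁻¹ Zᵀ P⁻¹` satisfies `diag(d) E = q² I`, so
`E = diag(eᵢ)` with `dᵢ eᵢ = q²`, and `i ↦ e_{n-i+1}` is again a positive divisibility chain.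
On the other hand `E` is equivalent to `Zᵀ`, hence to `diag(d)ᵀ = diag(d)`. Invariant factors are
unique: for every `m > 0`, the number `∏ gcd(dᵢ, m)` of solutions of `diag(d) x ≡ 0 (mod m)` does
not change under equivalence, and these numbers determine a positive divisibility chain.
Hence `d_{n-i+1} = e_i = q² / dᵢ`.
-/

open Matrix

def gcdEntries {n : ℕ} (Z : Matrix (Fin n) (Fin n) ℤ) : ℤ :=
  Finset.univ.gcd (fun p : Fin n × Fin n => Z p.1 p.2)

theorem ZMod.natCard_mul_eq_zero (m : ℕ) [NeZero m] (a : ℤ) :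
    Nat.card {y : ZMod m // (a : ZMod m) * y = 0} = Int.gcd a m := by
  have hker : ∀ y : ZMod m,
      (a : ZMod m) * y = 0 ↔ y ∈ (nsmulAddMonoidHom a.natAbs : ZMod m →+ ZMod m).ker := by
    intro y
    rcases Int.natAbs_eq a with h | h <;>
      · rw [h]; simp [nsmul_eq_mul]
  rw [Nat.card_congr (Equiv.subtypeEquivRight hker), IsAddCyclic.card_nsmulAddMonoidHom_ker,
    Nat.card_zmod, Nat.gcd_comm]
  rfl

namespace Matrix

variable {n R : Type*} [Fintype n] [DecidableEq n] [CommRing R]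

theorem natCard_ker_mulVec_mul_mul {U A V : Matrix n n R} (hU : IsUnit U.det)
    (hV : IsUnit V.det) :
    Nat.card {x : n → R // (U * A * V) *ᵥ x = 0} = Nat.card {x : n → R // A *ᵥ x = 0} := by
  have := invertibleOfIsUnitDet V hV
  refine Nat.card_congr (Equiv.subtypeEquiv (toLinearEquiv' V this).toEquiv fun x => ?_)
  rw [← mulVec_mulVec, ← mulVec_mulVec,
    (mulVec_injective_of_isUnit ((isUnit_iff_isUnit_det U).mpr hU)).eq_iff' (mulVec_zero U)]
  rfl

theorem natCard_ker_mulVec_diagonal (w : n → R) :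
    Nat.card {x : n → R // diagonal w *ᵥ x = 0} = ∏ i, Nat.card {y : R // w i * y = 0} := by
  rw [← Nat.card_pi]
  refine Nat.card_congr ((Equiv.subtypeEquivRight fun x => ?_).trans Equiv.subtypePiEquivPi)
  simp only [mulVec_diagonal, funext_iff, Pi.zero_apply]

theorem prod_gcd_eq_of_mul_diagonal_mul_eq {d e : n → ℤ} {U V : Matrix n n ℤ}
    (hU : IsUnit U.det) (hV : IsUnit V.det) (h : U * diagonal d * V = diagonal e) (m : ℕ)
    (hm : 0 < m) : ∏ i, Int.gcd (d i) m = ∏ i, Int.gcd (e i) m := by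
  have : NeZero m := ⟨hm.ne'⟩
  let f : Matrix n n ℤ →+* Matrix n n (ZMod m) := (Int.castRingHom (ZMod m)).mapMatrix
  have hf : ∀ w : n → ℤ, f (diagonal w) = diagonal fun i => (w i : ZMod m) :=
    fun w => diagonal_map Int.cast_zero
  have hfdet : ∀ A : Matrix n n ℤ, IsUnit A.det → IsUnit (f A).det := fun A hA => by
    rw [← RingHom.map_det]
    exact hA.map _
  have hker := natCard_ker_mulVec_mul_mul (A := f (diagonal d)) (hfdet U hU) (hfdet V hV)
  rw [← map_mul, ← map_mul, h, hf, hf, natCard_ker_mulVec_diagonal,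
    natCard_ker_mulVec_diagonal] at hker
  simpa only [ZMod.natCard_mul_eq_zero] using hker.symm

theorem exists_eq_diagonal_of_diagonal_mul_eq_smul_one [NoZeroDivisors R] {d : n → R}
    {E : Matrix n n R} {c : R} (hd : ∀ i, d i ≠ 0) (h : diagonal d * E = c • 1) :
    ∃ e : n → R, E = diagonal e ∧ ∀ i, d i * e i = c := by
  have hentry : ∀ i j, d i * E i j = (c • 1 : Matrix n n R) i j := fun i j => by
    rw [← h, diagonal_mul]
  refine ⟨fun i => E i i, ?_, fun i => by simpa using hentry i i⟩
  ext i j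
  rcases eq_or_ne i j with rfl | hij
  · simp
  · have hzero := hentry i j
    rw [smul_apply, one_apply_ne hij, smul_zero] at hzero
    simp [hij, (mul_eq_zero.mp hzero).resolve_left (hd i)]

theorem mul_transpose_eq_sq_smul_one_of_transpose_mul_eq_one {Y : Matrix n n ℚ}
    (hY : Yᵀ * Y = 1) {q : ℕ} (hq : 0 < q) {Z : Matrix n n ℤ}
    (hYZ : Y = ((1 : ℚ) / q) • Z.map (fun a => (a : ℚ))) :
    Z * Zᵀ = ((q : ℤ) ^ 2) • 1 := by
  have hZY : Z.map (Int.castRingHom ℚ) = (q : ℚ) • Y := by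
    rw [hYZ, smul_smul, mul_one_div_cancel (by positivity), one_smul]
    rfl
  apply map_injective (f := Int.castRingHom ℚ) Int.cast_injective
  beta_reduce
  rw [Matrix.map_mul, transpose_map, hZY, transpose_smul, Matrix.smul_mul, Matrix.mul_smul,
    mul_eq_one_comm.mp hY, smul_smul]
  ext i j
  simp only [smul_apply, map_apply, one_apply, smul_eq_mul]
  split_ifs <;> simp [sq]

end Matrix

theorem Finset.eq_of_prod_eq_pow_card {ι : Type*} {s : Finset ι} {f : ι → ℕ} {a : ℕ}
    (hpos : ∀ i ∈ s, 0 < f i) (hle : ∀ i ∈ s, f i ≤ a) (h : ∏ i ∈ s, f i = a ^ s.card) :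
    ∀ i ∈ s, f i = a := by
  by_contra! ⟨i, hi, hne⟩
  have := Finset.prod_lt_prod hpos hle ⟨i, hi, (hle i hi).lt_of_ne hne⟩
  rw [Finset.prod_const, ← h] at this
  exact this.false

namespace Int

theorem head_dvd_head_of_prod_gcd_eq {n : ℕ} {d e : Fin (n + 1) → ℤ} (hd : ∀ i, 0 < d i)
    (hdc : ∀ i j, i ≤ j → d i ∣ d j)
    (h : ∀ m : ℕ, 0 < m → ∏ i, Int.gcd (d i) m = ∏ i, Int.gcd (e i) m) : d 0 ∣ e 0 := by
  have hd0 : ((d 0).natAbs : ℤ) = d 0 := Int.natAbs_of_nonneg (hd 0).le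
  have hprod := h (d 0).natAbs (Int.natAbs_pos.mpr (hd 0).ne')
  simp only [hd0, fun i => Int.gcd_eq_natAbs_right (hdc 0 i (Fin.zero_le i)),
    Finset.prod_const, Finset.card_univ] at hprod
  refine Int.gcd_eq_natAbs_right_iff_dvd.mp (Finset.eq_of_prod_eq_pow_card
    (fun i _ => Int.gcd_pos_of_ne_zero_right _ (hd 0).ne')
    (fun i _ => Nat.le_of_dvd (Int.natAbs_pos.mpr (hd 0).ne') (Int.gcd_dvd_natAbs_right _ _))
    hprod.symm 0 (Finset.mem_univ 0))

theorem eq_of_prod_gcd_eq {n : ℕ} {d e : Fin n → ℤ} (hd : ∀ i, 0 < d i) (he : ∀ i, 0 < e i)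
    (hdc : ∀ i j, i ≤ j → d i ∣ d j) (hec : ∀ i j, i ≤ j → e i ∣ e j)
    (h : ∀ m : ℕ, 0 < m → ∏ i, Int.gcd (d i) m = ∏ i, Int.gcd (e i) m) : d = e := by
  induction n with
  | zero => exact funext fun i => i.elim0
  | succ n ih =>
    have hhead : d 0 = e 0 := Int.dvd_antisymm (hd 0).le (he 0).le
      (head_dvd_head_of_prod_gcd_eq hd hdc h)
      (head_dvd_head_of_prod_gcd_eq he hec fun m hm => (h m hm).symm)
    have htail : Fin.tail d = Fin.tail e := by
      refine ih (fun i => hd _) (fun i => he _)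
        (fun i j hij => hdc _ _ (Fin.succ_le_succ_iff.mpr hij))
        (fun i j hij => hec _ _ (Fin.succ_le_succ_iff.mpr hij)) fun m hm => ?_
      have hm' := h m hm
      rw [Fin.prod_univ_succ, Fin.prod_univ_succ, hhead] at hm'
      exact Nat.eq_of_mul_eq_mul_left (Int.gcd_pos_of_ne_zero_right _ (by omega)) hm'
    exact funext fun i => Fin.cases hhead (congrFun htail) i

end Int

theorem smith_diag_mul_rev_eq_of_mul_transpose_eq_smul_one {n : ℕ}
    {Z P Q : Matrix (Fin n) (Fin n) ℤ} {d : Fin n → ℤ} {c : ℤ} (hc : 0 < c)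
    (hZ : Z * Zᵀ = c • 1) (hd : ∀ i, 0 < d i) (hdc : ∀ i j, i ≤ j → d i ∣ d j)
    (hP : IsUnit P.det) (hQ : IsUnit Q.det) (hSNF : P * Z * Q = diagonal d) :
    ∀ i, d i * d i.rev = c := by
  have hPinv : P⁻¹ * P = 1 := nonsing_inv_mul P hP
  have hQinv : Q * Q⁻¹ = 1 := mul_nonsing_inv Q hQ
  have hDE : diagonal d * (Q⁻¹ * Zᵀ * P⁻¹) = c • 1 := by
    rw [← hSNF]
    calc P * Z * Q * (Q⁻¹ * Zᵀ * P⁻¹) = P * (Z * Zᵀ) * P⁻¹ := by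
          simp only [Matrix.mul_assoc, ← Matrix.mul_assoc Q, hQinv, Matrix.one_mul]
      _ = c • 1 := by
          rw [hZ, Matrix.mul_smul, Matrix.mul_one, Matrix.smul_mul, mul_nonsing_inv P hP]
  obtain ⟨e, hE, hde⟩ := exists_eq_diagonal_of_diagonal_mul_eq_smul_one (fun i => (hd i).ne') hDE
  have he : ∀ i, 0 < e i := fun i => pos_of_mul_pos_right (hde i ▸ hc) (hd i).le
  have hec : ∀ i j : Fin n, i ≤ j → e i.rev ∣ e j.rev := fun i j hij => by
    have := mul_dvd_mul_right (hdc _ _ (Fin.rev_le_rev.mpr hij)) (e i.rev)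
    rw [hde, ← hde j.rev] at this
    exact (mul_dvd_mul_iff_left (hd _).ne').mp this
  have hequiv : (Qᵀ * Q) * diagonal e * (P * Pᵀ) = diagonal d := by
    calc Qᵀ * Q * diagonal e * (P * Pᵀ) = Qᵀ * Zᵀ * Pᵀ := by
          simp only [← hE, Matrix.mul_assoc, ← Matrix.mul_assoc Q, hQinv,
            ← Matrix.mul_assoc P⁻¹, hPinv, Matrix.one_mul]
      _ = (P * Z * Q)ᵀ := by rw [transpose_mul, transpose_mul, Matrix.mul_assoc]
      _ = diagonal d := by rw [hSNF, diagonal_transpose]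
  have hQQ : IsUnit (Qᵀ * Q).det := by rw [det_mul, det_transpose]; exact hQ.mul hQ
  have hPP : IsUnit (P * Pᵀ).det := by rw [det_mul, det_transpose]; exact hP.mul hP
  have hde_rev : d = e ∘ Fin.rev := by
    refine Int.eq_of_prod_gcd_eq hd (fun i => he _) hdc hec fun m hm => ?_
    rw [← prod_gcd_eq_of_mul_diagonal_mul_eq hQQ hPP hequiv m hm]
    exact (Fintype.prod_equiv Fin.revPerm _ _ fun i => rfl).symm
  intro i
  simpa [hde_rev] using hde i

theorem smith_diag_symmetry_general {n : ℕ} (Y : Matrix (Fin n) (Fin n) ℚ)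
    (hY : Yᵀ * Y = 1) (q : ℕ) (hq : 0 < q)
    (Z : Matrix (Fin n) (Fin n) ℤ)
    (hYZ : Y = ((1 : ℚ) / (q : ℚ)) • Z.map (fun a => (a : ℚ)))
    (d : Fin n → ℤ) (hdpos : ∀ i, 0 < d i)
    (hchain : ∀ i j : Fin n, i ≤ j → d i ∣ d j)
    (P Q : Matrix (Fin n) (Fin n) ℤ) (hP : IsUnit P.det) (hQ : IsUnit Q.det)
    (hSNF : P * Z * Q = Matrix.diagonal d) :
    ∀ i : Fin n, d i * d i.rev = (q : ℤ) ^ 2 :=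
  smith_diag_mul_rev_eq_of_mul_transpose_eq_smul_one (by positivity)
    (mul_transpose_eq_sq_smul_one_of_transpose_mul_eq_one hY hq hYZ) hdpos hchain hP hQ hSNF

theorem smith_diag_symmetry {n : ℕ} (Y : Matrix (Fin n) (Fin n) ℚ)
    (hY : Yᵀ * Y = 1) (q : ℕ) (hq : 0 < q)
    (Z : Matrix (Fin n) (Fin n) ℤ) (hZ : gcdEntries Z = 1)
    (hYZ : Y = ((1 : ℚ) / (q : ℚ)) • Z.map (fun a => (a : ℚ)))
    (d : Fin n → ℤ) (hdpos : ∀ i, 0 < d i)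
    (hchain : ∀ i j : Fin n, i ≤ j → d i ∣ d j)
    (P Q : Matrix (Fin n) (Fin n) ℤ) (hP : IsUnit P.det) (hQ : IsUnit Q.det)
    (hSNF : P * Z * Q = Matrix.diagonal d) :
    ∀ i : Fin n, d i * d i.rev = (q : ℤ) ^ 2 :=
  smith_diag_symmetry_general Y hY q hq Z hYZ d hdpos hchain P Q hP hQ hSNF
end

section
/- Let Y = (1/q)Z be an n×n rational orthogonal matrix with Z an integer matrix with gcd 1, and let q_1 | ... | q_n be the Smith normal form diagonal of Z. Then q_n = q². -/
/-!
From `Zᵀ Z = q² I` and `P Z Q = diag d` with `P`, `Q` unimodular one gets `Zᵀ = Q · diag m · P`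
with `mᵢ dᵢ = q²`. The chain `dᵢ ∣ dₙ` turns into `mₙ ∣ mᵢ`, so `mₙ` divides every entry of `Z`,
hence their gcd `1`. Thus `mₙ = 1` and `dₙ = q²`.
-/

open Matrix

theorem dvd_of_mul_eq_mul_of_dvd {α : Type*} [CommMonoidWithZero α] [IsCancelMulZero α]
    {a b x y : α} (h : a * x = b * y) (hxy : x ∣ y) (hx : x ≠ 0) : b ∣ a := by
  obtain ⟨t, rfl⟩ := hxy
  exact ⟨t, mul_right_cancel₀ hx (by rw [h, mul_assoc, mul_comm x])⟩

namespace Matrix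

variable {ι R : Type*} [Fintype ι] [DecidableEq ι]

theorem dvd_mul_diagonal_mul_apply [CommSemiring R] {a : R} {m : ι → R} (hm : ∀ k, a ∣ m k)
    (A B : Matrix ι ι R) (i j : ι) : a ∣ (A * diagonal m * B) i j := by
  rw [mul_apply]
  simp only [mul_diagonal]
  exact Finset.dvd_sum fun k _ => ((hm k).mul_left _).mul_right _

theorem eq_diagonal_of_mul_diagonal_eq_smul_one [CommRing R] [NoZeroDivisors R]
    {M : Matrix ι ι R} {d : ι → R} {c : R} (hd : ∀ i, d i ≠ 0)
    (h : M * diagonal d = c • 1) : M = diagonal fun i => M i i := by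
  ext i j
  obtain rfl | hij := eq_or_ne i j
  · simp
  · have hM := congrFun (congrFun h i) j
    simp only [mul_diagonal, smul_apply, one_apply_ne hij, smul_zero] at hM
    simpa [diagonal_apply_ne _ hij] using (mul_eq_zero.mp hM).resolve_right (hd j)

theorem exists_transpose_eq_mul_diagonal_mul [CommRing R] [NoZeroDivisors R]
    {Z P Q : Matrix ι ι R} [Invertible P] [Invertible Q] {d : ι → R} {c : R}
    (hd : ∀ i, d i ≠ 0) (hZ : Zᵀ * Z = c • 1) (hPZQ : P * Z * Q = diagonal d) :
    ∃ m : ι → R, Zᵀ = Q * diagonal m * P ∧ ∀ i, m i * d i = c := by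
  set M := ⅟Q * Zᵀ * ⅟P
  have hMd : M * diagonal d = c • 1 := by
    rw [← hPZQ]
    calc M * (P * Z * Q) = ⅟Q * (Zᵀ * Z) * Q := by
          simp only [M, Matrix.mul_assoc, invOf_mul_cancel_left]
      _ = c • 1 := by rw [hZ, Matrix.mul_smul, Matrix.smul_mul, Matrix.mul_one, invOf_mul_self]
  refine ⟨fun i => M i i, ?_, fun i => ?_⟩
  · rw [← eq_diagonal_of_mul_diagonal_eq_smul_one hd hMd]
    simp only [M, Matrix.mul_assoc, mul_invOf_cancel_left, invOf_mul_self, Matrix.mul_one]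
  · simpa using congrFun (congrFun hMd i) i

theorem transpose_mul_self_eq_of_smul_intCast {Y : Matrix ι ι ℚ} (hY : Yᵀ * Y = 1) {q : ℕ}
    (hq : q ≠ 0) {Z : Matrix ι ι ℤ} (hYZ : Y = ((1 : ℚ) / q) • Z.map (fun a => (a : ℚ))) :
    Zᵀ * Z = (q : ℤ) ^ 2 • 1 := by
  have hZY : Z.map (Int.castRingHom ℚ) = (q : ℚ) • Y := by
    rw [hYZ, smul_smul, mul_one_div_cancel (Nat.cast_ne_zero.mpr hq), one_smul]
    rfl
  apply map_injective (f := Int.castRingHom ℚ) Int.cast_injective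
  dsimp only
  rw [Matrix.map_mul, transpose_map, hZY, transpose_smul, Matrix.smul_mul, Matrix.mul_smul, hY,
    smul_smul, ← sq]
  ext i j
  simp only [map_apply, smul_apply, one_apply, smul_eq_mul]
  split_ifs <;> simp

end Matrix

theorem dvd_gcdEntries {n : ℕ} {Z : Matrix (Fin n) (Fin n) ℤ} {a : ℤ} (h : ∀ i j, a ∣ Z i j) :
    a ∣ gcdEntries Z :=
  Finset.dvd_gcd fun p _ => h p.1 p.2

theorem smith_diag_last_eq_q_sq {n : ℕ} (hn : 0 < n) (Y : Matrix (Fin n) (Fin n) ℚ)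
    (hY : Yᵀ * Y = 1) (q : ℕ) (hq : 0 < q)
    (Z : Matrix (Fin n) (Fin n) ℤ) (hZ : gcdEntries Z = 1)
    (hYZ : Y = ((1 : ℚ) / (q : ℚ)) • Z.map (fun a => (a : ℚ)))
    (d : Fin n → ℤ) (hdpos : ∀ i, 0 < d i)
    (hchain : ∀ i j : Fin n, i ≤ j → d i ∣ d j)
    (P Q : Matrix (Fin n) (Fin n) ℤ) (hP : IsUnit P.det) (hQ : IsUnit Q.det)
    (hSNF : P * Z * Q = Matrix.diagonal d) :
    d ⟨n - 1, Nat.sub_lt hn one_pos⟩ = (q : ℤ) ^ 2 := by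
  set last : Fin n := ⟨n - 1, Nat.sub_lt hn one_pos⟩
  have := P.invertibleOfIsUnitDet hP
  have := Q.invertibleOfIsUnitDet hQ
  obtain ⟨m, hZT, hmd⟩ := exists_transpose_eq_mul_diagonal_mul (fun i => (hdpos i).ne')
    (transpose_mul_self_eq_of_smul_intCast hY hq.ne' hYZ) hSNF
  have hm_dvd : ∀ k, m last ∣ m k := fun k =>
    dvd_of_mul_eq_mul_of_dvd ((hmd k).trans (hmd last).symm)
      (hchain k last (Fin.mk_le_mk.mpr (Nat.le_sub_one_of_lt k.isLt))) (hdpos k).ne'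
  have hm_unit : IsUnit (m last) := isUnit_of_dvd_one <| hZ ▸ dvd_gcdEntries fun i j => by
    rw [← transpose_apply Z, hZT]
    exact dvd_mul_diagonal_mul_apply hm_dvd Q P j i
  have hm_pos : 0 < m last := by
    refine pos_of_mul_pos_left ?_ (hdpos last).le
    rw [hmd last]
    positivity
  have hm_one : m last = 1 := (Int.isUnit_iff.mp hm_unit).resolve_right (by omega)
  simpa [hm_one] using hmd last
end

section
/- Let Y = (1/q)Z be an n×n rational orthogonal matrix with Z an integer matrix with gcd 1, and let q_1 | ... | q_n be the Smith normal form diagonal of Z. Then for i ≤ ⌊n/2⌋, q_i divides q, and for i > ⌊n/2⌋, q divides q_i. -/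
open Matrix

section aux

variable {n k : ℕ}

lemma auxStrictMonoFinLe (f : Fin k → Fin n) (hf : StrictMono f) :
    ∀ j : Fin k, (j : ℕ) ≤ (f j : ℕ) := by
  have H : ∀ m : ℕ, ∀ h : m < k, m ≤ (f ⟨m, h⟩ : ℕ) := by
    intro m
    induction m with
    | zero => intro h; exact Nat.zero_le _
    | succ m ih =>
      intro h
      have h' : m < k := Nat.lt_of_succ_lt h
      have hlt : f ⟨m, h'⟩ < f ⟨m + 1, h⟩ := hf (by simp [Fin.lt_def])
      have h2 := Fin.lt_def.mp hlt
      have h3 := ih h'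
      omega
  intro j; simpa using H j.1 j.2

lemma auxProdCastLEDvd (hk : k ≤ n) (d : Fin n → ℤ)
    (hchain : ∀ i j : Fin n, i ≤ j → d i ∣ d j)
    (r : Fin k → Fin n) (hr : Function.Injective r) :
    (∏ j : Fin k, d (Fin.castLE hk j)) ∣ ∏ j : Fin k, d (r j) := by
  classical
  set s : Finset (Fin n) := Finset.image r Finset.univ with hs
  have hcard : s.card = k := by
    rw [hs, Finset.card_image_of_injective _ hr, Finset.card_univ, Fintype.card_fin]
  set o := s.orderIsoOfFin hcard with ho
  have hmono : StrictMono (fun j : Fin k => (o j : Fin n)) := fun a b hab => o.strictMono hab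
  have hle : ∀ j : Fin k, (j : ℕ) ≤ ((o j : Fin n) : ℕ) := auxStrictMonoFinLe _ hmono
  have h1 : ∏ j : Fin k, d (r j) = ∏ j : Fin k, d (o j) := by
    have e1 : ∏ x ∈ s, d x = ∏ j : Fin k, d (r j) := by
      rw [hs]; exact Finset.prod_image (fun a _ b _ hab => hr hab)
    have e2 : ∏ j : Fin k, d (o j) = ∏ x : {x // x ∈ s}, d x :=
      (Equiv.prod_comp o.toEquiv (fun x : {x // x ∈ s} => d x)).symm ▸ rfl
    have e3 : ∏ x : {x // x ∈ s}, d (x : Fin n) = ∏ x ∈ s, d x := Finset.prod_coe_sort s d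
    rw [← e1, e2, e3]
  rw [h1]
  exact Finset.prod_dvd_prod_of_dvd _ _ (fun j _ =>
    hchain _ _ (by rw [Fin.le_def]; simpa using hle j))

lemma auxDiagMinorDvd (hk : k ≤ n) (d : Fin n → ℤ)
    (hchain : ∀ i j : Fin n, i ≤ j → d i ∣ d j)
    (r c : Fin k → Fin n) :
    (∏ j : Fin k, d (Fin.castLE hk j)) ∣ ((diagonal d).submatrix r c).det := by
  classical
  by_cases hr : Function.Injective r
  · have hsub : ((diagonal d).submatrix r c) =
        Matrix.of (fun i j => d (r i) * ((1 : Matrix (Fin n) (Fin n) ℤ).submatrix r c) i j) := by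
      ext i j
      by_cases h : r i = c j <;> simp [diagonal_apply, one_apply, h]
    rw [hsub, det_mul_column]
    exact Dvd.dvd.mul_right (auxProdCastLEDvd hk d hchain r hr) _
  · obtain ⟨a, b, hab, hne⟩ : ∃ a b, r a = r b ∧ a ≠ b := by
      rw [Function.Injective] at hr; push_neg at hr
      obtain ⟨a, b, h1, h2⟩ := hr; exact ⟨a, b, h1, h2⟩
    have : ((diagonal d).submatrix r c).det = 0 :=
      det_zero_of_row_eq hne (by ext j; simp [hab])
    simp [this]

lemma auxDetSubmatrixMulLeftDvd (g : ℤ)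
    (A : Matrix (Fin n) (Fin n) ℤ) (c : Fin k → Fin n)
    (hg : ∀ f : Fin k → Fin n, g ∣ ((A.submatrix f c).det))
    (M : Matrix (Fin n) (Fin n) ℤ) (r : Fin k → Fin n) :
    g ∣ ((M * A).submatrix r c).det := by
  have h1 : ((M * A).submatrix r c : Matrix (Fin k) (Fin k) ℤ)
      = Matrix.of (fun i => ∑ t : Fin n, M (r i) t • (fun j => A t (c j))) := by
    ext i j
    simp [Matrix.mul_apply, Matrix.submatrix_apply, Finset.sum_apply]
  have key := (detRowAlternating : (Fin k → ℤ) [⋀^Fin k]→ₗ[ℤ] ℤ).toMultilinearMap.map_sum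
    (α := fun _ => Fin n) (g := fun i t => M (r i) t • (fun j => A t (c j)))
  have h2 : ((M * A).submatrix r c).det
      = ∑ f : Fin k → Fin n, (∏ i, M (r i) (f i)) • (A.submatrix f c).det := by
    rw [h1]
    show (detRowAlternating (fun i => ∑ t : Fin n, M (r i) t • (fun j => A t (c j)))) = _
    rw [show (detRowAlternating (fun i => ∑ t : Fin n, M (r i) t • (fun j => A t (c j))))
        = (detRowAlternating : (Fin k → ℤ) [⋀^Fin k]→ₗ[ℤ] ℤ).toMultilinearMap
            (fun i => ∑ t : Fin n, M (r i) t • (fun j => A t (c j))) from rfl, key]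
    refine Finset.sum_congr rfl fun f _ => ?_
    rw [MultilinearMap.map_smul_univ]
    rfl
  rw [h2]
  exact Finset.dvd_sum fun f _ => Dvd.dvd.mul_left (hg f) _

lemma auxDetSubmatrixMulRightDvd (g : ℤ)
    (A : Matrix (Fin n) (Fin n) ℤ) (r : Fin k → Fin n)
    (hg : ∀ f : Fin k → Fin n, g ∣ ((A.submatrix r f).det))
    (M : Matrix (Fin n) (Fin n) ℤ) (c : Fin k → Fin n) :
    g ∣ ((A * M).submatrix r c).det := by
  rw [← Matrix.det_transpose, Matrix.transpose_submatrix, Matrix.transpose_mul]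
  refine auxDetSubmatrixMulLeftDvd g Aᵀ r (fun f => ?_) Mᵀ c
  rw [← Matrix.transpose_submatrix, Matrix.det_transpose]
  exact hg f

lemma auxSnfProdDvd (hk : k ≤ n) (A : Matrix (Fin n) (Fin n) ℤ)
    (d e : Fin n → ℤ)
    (hcd : ∀ i j : Fin n, i ≤ j → d i ∣ d j)
    (P₁ Q₁ P₂ Q₂ : Matrix (Fin n) (Fin n) ℤ)
    (hP₁ : IsUnit P₁.det) (hQ₁ : IsUnit Q₁.det)
    (h₁ : P₁ * A * Q₁ = diagonal d) (h₂ : P₂ * A * Q₂ = diagonal e) :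
    (∏ j : Fin k, d (Fin.castLE hk j)) ∣ ∏ j : Fin k, e (Fin.castLE hk j) := by
  set g := ∏ j : Fin k, d (Fin.castLE hk j) with hg
  have hA' : A = P₁⁻¹ * (diagonal d * Q₁⁻¹) := by
    rw [← h₁]
    rw [Matrix.mul_assoc, Matrix.mul_assoc, Matrix.mul_nonsing_inv _ hQ₁, Matrix.mul_one,
      ← Matrix.mul_assoc, Matrix.nonsing_inv_mul _ hP₁, Matrix.one_mul]
  have hA : ∀ r c : Fin k → Fin n, g ∣ ((A.submatrix r c).det) := by
    intro r c
    rw [hA']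
    refine auxDetSubmatrixMulLeftDvd g _ c (fun f => ?_) _ r
    exact auxDetSubmatrixMulRightDvd g _ f (fun f' => auxDiagMinorDvd hk d hcd f f') _ c
  have hE : g ∣ (((diagonal e).submatrix (Fin.castLE hk) (Fin.castLE hk)).det) := by
    rw [← h₂]
    have hassoc : P₂ * A * Q₂ = P₂ * (A * Q₂) := by rw [Matrix.mul_assoc]
    rw [hassoc]
    refine auxDetSubmatrixMulLeftDvd g _ _ (fun f => ?_) _ _
    exact auxDetSubmatrixMulRightDvd g _ f (fun f' => hA f f') _ _
  rwa [submatrix_diagonal e _ (Fin.castLE_injective hk), det_diagonal] at hE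

lemma auxSnfUnique (A : Matrix (Fin n) (Fin n) ℤ)
    (d e : Fin n → ℤ) (hd : ∀ i, 0 < d i) (he : ∀ i, 0 < e i)
    (hcd : ∀ i j : Fin n, i ≤ j → d i ∣ d j)
    (hce : ∀ i j : Fin n, i ≤ j → e i ∣ e j)
    (P₁ Q₁ P₂ Q₂ : Matrix (Fin n) (Fin n) ℤ)
    (hP₁ : IsUnit P₁.det) (hQ₁ : IsUnit Q₁.det)
    (hP₂ : IsUnit P₂.det) (hQ₂ : IsUnit Q₂.det)
    (h₁ : P₁ * A * Q₁ = diagonal d) (h₂ : P₂ * A * Q₂ = diagonal e) :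
    ∀ i, d i = e i := by
  have hprod : ∀ k (hk : k ≤ n),
      (∏ j : Fin k, d (Fin.castLE hk j)) = ∏ j : Fin k, e (Fin.castLE hk j) := by
    intro k hk
    have h1 := auxSnfProdDvd hk A d e hcd P₁ Q₁ P₂ Q₂ hP₁ hQ₁ h₁ h₂
    have h2 := auxSnfProdDvd hk A e d hce P₂ Q₂ P₁ Q₁ hP₂ hQ₂ h₂ h₁
    exact Int.dvd_antisymm (Finset.prod_nonneg fun j _ => (hd _).le)
      (Finset.prod_nonneg fun j _ => (he _).le) h1 h2
  intro i
  have hk1 : i.1 ≤ n := i.2.le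
  have hk2 : i.1 + 1 ≤ n := i.2
  have e1 := hprod i.1 hk1
  have e2 := hprod (i.1 + 1) hk2
  rw [Fin.prod_univ_castSucc (f := fun j : Fin (i.1+1) => d (Fin.castLE hk2 j)),
    Fin.prod_univ_castSucc (f := fun j : Fin (i.1+1) => e (Fin.castLE hk2 j))] at e2
  have hcast : ∀ (f : Fin n → ℤ), (fun j : Fin i.1 => f (Fin.castLE hk2 j.castSucc))
      = fun j : Fin i.1 => f (Fin.castLE hk1 j) := by
    intro f; funext j; rfl
  rw [hcast d, hcast e] at e2
  have hlast : (Fin.castLE hk2 (Fin.last i.1)) = i := by ext; simp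
  rw [hlast] at e2
  rw [e1] at e2
  have hpos : (0:ℤ) < ∏ j : Fin i.1, e (Fin.castLE hk1 j) := Finset.prod_pos fun j _ => he _
  exact mul_left_cancel₀ hpos.ne' e2

end aux

theorem smith_diag_divides_q {n : ℕ} (Y : Matrix (Fin n) (Fin n) ℚ)
    (hY : Yᵀ * Y = 1) (q : ℕ) (hq : 0 < q)
    (Z : Matrix (Fin n) (Fin n) ℤ) (hZ : gcdEntries Z = 1)
    (hYZ : Y = ((1 : ℚ) / (q : ℚ)) • Z.map (fun a => (a : ℚ)))
    (d : Fin n → ℤ) (hdpos : ∀ i, 0 < d i)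
    (hchain : ∀ i j : Fin n, i ≤ j → d i ∣ d j)
    (P Q : Matrix (Fin n) (Fin n) ℤ) (hP : IsUnit P.det) (hQ : IsUnit Q.det)
    (hSNF : P * Z * Q = Matrix.diagonal d) :
    ∀ i : Fin n, ((i : ℕ) + 1 ≤ n / 2 → d i ∣ (q : ℤ)) ∧
      (n / 2 < (i : ℕ) + 1 → (q : ℤ) ∣ d i) := by
  classical
  have hq0 : ((q:ℚ)) ≠ 0 := Nat.cast_ne_zero.mpr hq.ne'
  -- Step 1 : Zᵀ * Z = q² • 1 and Z * Zᵀ = q² • 1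
  have key : ∀ (A B : Matrix (Fin n) (Fin n) ℤ),
      (((1:ℚ)/q) • A.map (fun a => (a:ℚ))) * (((1:ℚ)/q) • B.map (fun a => (a:ℚ))) = 1 →
      A * B = ((q:ℤ)^2) • 1 := by
    intro A B h
    rw [Matrix.smul_mul, Matrix.mul_smul, smul_smul] at h
    have hmap : (A.map (fun a => (a:ℚ))) * (B.map (fun a => (a:ℚ)))
        = (A * B).map (fun a => (a:ℚ)) := by
      ext i j
      simp [Matrix.mul_apply, Matrix.map_apply]
    rw [hmap] at h
    ext i j
    have h2 := congrFun (congrFun h i) j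
    simp only [Matrix.smul_apply, Matrix.map_apply, Matrix.one_apply, smul_eq_mul] at h2 ⊢
    by_cases hij : i = j
    · subst hij
      simp only [if_pos rfl] at h2 ⊢
      have h3 : ((A*B) i i : ℚ) = (q:ℚ)^2 := by
        field_simp at h2
        rw [h2]; simp
      rw [show ((q:ℤ)^2 * if True then 1 else 0) = (q:ℤ)^2 by simp]
      exact_mod_cast h3
    · simp only [if_neg hij] at h2 ⊢
      have h3 : ((A*B) i j : ℚ) = 0 := by
        rcases mul_eq_zero.mp h2 with h3 | h3
        · exact absurd h3 (by positivity)
        · exact h3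
      exact_mod_cast h3
  have hTmap : Yᵀ = ((1:ℚ)/q) • Zᵀ.map (fun a => (a:ℚ)) := by
    rw [hYZ, Matrix.transpose_smul, Matrix.transpose_map]
  have hZtZ : Zᵀ * Z = ((q:ℤ)^2) • 1 := by
    apply key; rw [← hTmap, ← hYZ]; exact hY
  have hZZt : Z * Zᵀ = ((q:ℤ)^2) • 1 := by
    apply key; rw [← hTmap, ← hYZ]; exact mul_eq_one_comm.mp hY
  -- Step 2 : N := Q⁻¹ Zᵀ P⁻¹
  have hPP : P * P⁻¹ = 1 := Matrix.mul_nonsing_inv _ hP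
  have hPP' : P⁻¹ * P = 1 := Matrix.nonsing_inv_mul _ hP
  have hQQ : Q * Q⁻¹ = 1 := Matrix.mul_nonsing_inv _ hQ
  have hQQ' : Q⁻¹ * Q = 1 := Matrix.nonsing_inv_mul _ hQ
  set N : Matrix (Fin n) (Fin n) ℤ := Q⁻¹ * Zᵀ * P⁻¹ with hN
  have hDN : diagonal d * N = ((q:ℤ)^2) • 1 := by
    have h1 : diagonal d * N = P * (Z * ((Q * Q⁻¹) * (Zᵀ * P⁻¹))) := by
      rw [← hSNF, hN]; simp only [Matrix.mul_assoc]
    rw [hQQ, Matrix.one_mul, ← Matrix.mul_assoc Z, hZZt, Matrix.smul_mul, Matrix.one_mul,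
      Matrix.mul_smul, hPP] at h1
    exact h1
  -- e is the diagonal of N
  set e : Fin n → ℤ := fun i => N i i with he
  have hde : ∀ i, d i * e i = (q:ℤ)^2 := by
    intro i
    have h := congrFun (congrFun hDN i) i
    simpa [Matrix.diagonal_mul, Matrix.smul_apply, Matrix.one_apply] using h
  have hNe : N = diagonal e := by
    ext i j
    by_cases hij : i = j
    · subst hij; simp [he]
    · have h := congrFun (congrFun hDN i) j
      simp only [Matrix.diagonal_mul, Matrix.smul_apply, Matrix.one_apply, if_neg hij,
        smul_eq_mul, mul_zero] at h
      rw [diagonal_apply_ne _ hij]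
      exact (mul_eq_zero.mp h).resolve_left (hdpos i).ne'
  have hq2pos : (0:ℤ) < (q:ℤ)^2 := by positivity
  have hepos : ∀ i, 0 < e i := by
    intro i
    by_contra hcon
    push_neg at hcon
    have := hde i
    nlinarith [hdpos i]
  have hchain_e : ∀ a b : Fin n, a ≤ b → e b ∣ e a := by
    intro a b hab
    obtain ⟨t, ht⟩ := hchain a b hab
    have h1 : d a * e a = d a * (e b * t) := by
      rw [hde a, ← hde b, ht]; ring
    exact ⟨t, mul_left_cancel₀ (hdpos a).ne' h1⟩
  -- Step 3 : the reversal matrix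
  set R : Matrix (Fin n) (Fin n) ℤ := Matrix.of (fun i j => if Fin.rev i = j then 1 else 0)
    with hRdef
  have hRmul : ∀ M : Matrix (Fin n) (Fin n) ℤ, R * M = M.submatrix Fin.rev id := by
    intro M; ext i j
    simp [hRdef, Matrix.mul_apply, Finset.sum_ite_eq]
  have hmulR : ∀ M : Matrix (Fin n) (Fin n) ℤ, M * R = M.submatrix id Fin.rev := by
    intro M; ext i j
    have hiff : ∀ t : Fin n, (Fin.rev t = j) ↔ (t = Fin.rev j) := by
      intro t
      constructor <;> intro h
      · rw [← h, Fin.rev_rev]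
      · rw [h, Fin.rev_rev]
    simp only [hRdef, Matrix.mul_apply, Matrix.of_apply, Matrix.submatrix_apply, id_eq]
    simp_rw [hiff]
    simp [Finset.sum_ite_eq']
  have hRR : R * R = 1 := by
    rw [hRmul]
    ext i j
    simp [hRdef, Matrix.one_apply, Fin.rev_rev, Fin.rev_inj]
  have hRdet : IsUnit R.det := by
    refine IsUnit.of_mul_eq_one (a := R.det) R.det ?_
    rw [← det_mul, hRR, det_one]
  -- Step 4 : second SNF-style decomposition of Z
  have hPTdet : IsUnit (Pᵀ).det := by rwa [det_transpose]
  have hQTdet : IsUnit (Qᵀ).det := by rwa [det_transpose]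
  have hZPNQ : Z = Pᵀ * N * Qᵀ := by
    have h1 : Q * N * P = Zᵀ := by
      rw [hN]
      calc Q * (Q⁻¹ * Zᵀ * P⁻¹) * P = (Q * Q⁻¹) * Zᵀ * (P⁻¹ * P) := by
            simp only [Matrix.mul_assoc]
        _ = Zᵀ := by rw [hQQ, hPP', Matrix.one_mul, Matrix.mul_one]
    calc Z = (Zᵀ)ᵀ := (transpose_transpose Z).symm
      _ = (Q * N * P)ᵀ := by rw [h1]
      _ = Pᵀ * Nᵀ * Qᵀ := by
          rw [Matrix.transpose_mul, Matrix.transpose_mul, Matrix.mul_assoc]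
      _ = Pᵀ * N * Qᵀ := by rw [hNe, diagonal_transpose]
  have hrevinj : Function.Injective (Fin.rev : Fin n → Fin n) := fun a b h => by
    rw [← Fin.rev_rev a, h, Fin.rev_rev]
  have h₂ : (R * (Pᵀ)⁻¹) * Z * ((Qᵀ)⁻¹ * R) = diagonal (fun i => e (Fin.rev i)) := by
    have h1 : (R * (Pᵀ)⁻¹) * Z * ((Qᵀ)⁻¹ * R)
        = R * (((Pᵀ)⁻¹ * Pᵀ) * (N * (Qᵀ * ((Qᵀ)⁻¹ * R)))) := by
      rw [hZPNQ]; simp only [Matrix.mul_assoc]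
    rw [← Matrix.mul_assoc Qᵀ, Matrix.mul_nonsing_inv _ hQTdet,
      Matrix.nonsing_inv_mul _ hPTdet, Matrix.one_mul, Matrix.one_mul] at h1
    rw [h1, ← Matrix.mul_assoc, hNe, hmulR, hRmul]
    rw [Matrix.submatrix_submatrix]
    rw [show ((Fin.rev : Fin n → Fin n) ∘ id) = Fin.rev from rfl,
      show (id ∘ (Fin.rev : Fin n → Fin n)) = Fin.rev from rfl]
    exact submatrix_diagonal e Fin.rev hrevinj
  have hUdet : IsUnit (R * (Pᵀ)⁻¹).det := by
    rw [det_mul]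
    exact hRdet.mul (Matrix.isUnit_nonsing_inv_det _ hPTdet)
  have hVdet : IsUnit ((Qᵀ)⁻¹ * R).det := by
    rw [det_mul]
    exact (Matrix.isUnit_nonsing_inv_det _ hQTdet).mul hRdet
  have hchain' : ∀ a b : Fin n, a ≤ b → e (Fin.rev a) ∣ e (Fin.rev b) := by
    intro a b hab
    exact hchain_e _ _ (Fin.rev_le_rev.mpr hab)
  have huniq := auxSnfUnique Z d (fun i => e (Fin.rev i)) hdpos (fun i => hepos _)
    hchain hchain' P Q (R * (Pᵀ)⁻¹) ((Qᵀ)⁻¹ * R) hP hQ hUdet hVdet hSNF h₂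
  have hpair : ∀ i, d i * d (Fin.rev i) = (q:ℤ)^2 := by
    intro i
    have h1 : d (Fin.rev i) = e i := by
      simpa [Fin.rev_rev] using huniq (Fin.rev i)
    rw [h1]; exact hde i
  -- Step 5 : conclude
  intro i
  have hi := i.2
  constructor
  · intro hcase
    have hle : i ≤ Fin.rev i := by
      rw [Fin.le_def, Fin.val_rev]; omega
    obtain ⟨t, ht⟩ := hchain i _ hle
    have h1 : d i ^ 2 ∣ (q:ℤ)^2 := ⟨t, by rw [← hpair i, ht]; ring⟩
    exact (Int.pow_dvd_pow_iff two_ne_zero).mp h1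
  · intro hcase
    have hle : Fin.rev i ≤ i := by
      rw [Fin.le_def, Fin.val_rev]; omega
    obtain ⟨t, ht⟩ := hchain _ i hle
    have h1 : (q:ℤ)^2 ∣ d i ^ 2 := ⟨t, by
      calc d i ^ 2 = (d i * d (Fin.rev i)) * t := by rw [ht]; ring
        _ = (q:ℤ)^2 * t := by rw [hpair i]⟩
    exact (Int.pow_dvd_pow_iff two_ne_zero).mp h1
end

section
/- Let v = (a_1,...,a_n) be a nonzero integer vector with gcd(a_1,...,a_n) = 1. Then the gcd of the nonzero entries of the integer matrix (v^T v)I − 2vv^T equals 1 if v^T v is odd, and equals 2 if v^T v is even. -/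
open Matrix

theorem gcd_reflection_matrix {n : ℕ} (v : Fin n → ℤ) (hv : v ≠ 0)
    (hgcd : Finset.univ.gcd v = 1) :
    gcdEntries ((∑ i, v i * v i) • (1 : Matrix (Fin n) (Fin n) ℤ)
        - 2 • Matrix.vecMulVec v v) =
      if Odd (∑ i, v i * v i) then 1 else 2 := by
  set S : ℤ := ∑ i, v i * v i with hS
  set Z : Matrix (Fin n) (Fin n) ℤ := S • 1 - 2 • Matrix.vecMulVec v v with hZ
  have hZapp : ∀ i j, Z i j = (if i = j then S else 0) - 2 * (v i * v j) := by
    intro i j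
    simp only [hZ, Matrix.sub_apply, Matrix.smul_apply, Matrix.one_apply,
      Matrix.vecMulVec_apply, smul_eq_mul, mul_ite, mul_one, mul_zero]
    ring
  set g : ℤ := gcdEntries Z with hg
  have hdvd : ∀ i j, g ∣ Z i j := fun i j => Finset.gcd_dvd (Finset.mem_univ (i, j))
  -- g divides S * v i
  have hSv : ∀ i, g ∣ S * v i := by
    intro i
    have h1 : g ∣ ∑ j, Z i j * v j := Finset.dvd_sum fun j _ => Dvd.dvd.mul_right (hdvd i j) _
    have h2 : (∑ j, Z i j * v j) = -(S * v i) := by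
      have e1 : (∑ j, Z i j * v j)
          = (∑ j, (if i = j then S else 0) * v j) - 2 * v i * ∑ j, v j * v j := by
        rw [Finset.mul_sum, ← Finset.sum_sub_distrib]
        refine Finset.sum_congr rfl fun j _ => ?_
        rw [hZapp]; ring
      have e2 : (∑ j, (if i = j then S else 0) * v j) = S * v i := by
        simp [ite_mul, zero_mul]
      rw [e1, e2, ← hS]; ring
    rw [h2, dvd_neg] at h1
    exact h1
  have hgS : g ∣ S := by
    have h1 : g ∣ Finset.univ.gcd (fun i => S * v i) := Finset.dvd_gcd fun i _ => hSv i
    rwa [Finset.gcd_mul_left, hgcd, mul_one, dvd_normalize_iff] at h1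
  -- g divides 2 * (v i * v j)
  have h2v : ∀ i j, g ∣ 2 * (v i * v j) := by
    intro i j
    by_cases hij : i = j
    · subst hij
      have e : (2 : ℤ) * (v i * v i) = S - Z i i := by rw [hZapp]; simp
      rw [e]
      exact dvd_sub hgS (hdvd i i)
    · have e : (2 : ℤ) * (v i * v j) = -(Z i j) := by rw [hZapp, if_neg hij]; ring
      rw [e, dvd_neg]
      exact hdvd i j
  -- g divides 2
  have hg2 : g ∣ 2 := by
    have step : ∀ i, g ∣ 2 * v i := by
      intro i
      have h1 : g ∣ Finset.univ.gcd (fun j => (2 * v i) * v j) :=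
        Finset.dvd_gcd fun j _ => by rw [mul_assoc]; exact h2v i j
      rwa [Finset.gcd_mul_left, hgcd, mul_one, dvd_normalize_iff] at h1
    have h1 : g ∣ Finset.univ.gcd (fun i => 2 * v i) := Finset.dvd_gcd fun i _ => step i
    rwa [Finset.gcd_mul_left, hgcd, mul_one, dvd_normalize_iff] at h1
  have hgnonneg : 0 ≤ g :=
    Int.nonneg_of_normalize_eq_self (Finset.normalize_gcd)
  have hgpos : 0 < g := by
    rcases lt_or_eq_of_le hgnonneg with h | h
    · exact h
    · exfalso; rw [← h] at hg2; norm_num at hg2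
  have hgle : g ≤ 2 := Int.le_of_dvd (by norm_num) hg2
  have h12 : g = 1 ∨ g = 2 := by omega
  by_cases hodd : Odd S
  · rw [if_pos hodd]
    rcases h12 with h | h
    · exact h
    · exfalso
      rw [h] at hgS
      have : Even S := even_iff_exists_two_mul.mpr (by
        obtain ⟨c, hc⟩ := hgS; exact ⟨c, hc⟩)
      exact (Int.not_odd_iff_even.mpr this) hodd
  · rw [if_neg hodd]
    rcases h12 with h | h
    · exfalso
      have heven : Even S := Int.not_odd_iff_even.mp hodd
      have h2Z : ∀ i j, (2:ℤ) ∣ Z i j := by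
        intro i j
        rw [hZapp]
        refine dvd_sub ?_ (dvd_mul_right 2 _)
        split
        · exact heven.two_dvd
        · exact dvd_zero 2
      have h2g : (2:ℤ) ∣ g := Finset.dvd_gcd fun p _ => h2Z p.1 p.2
      rw [h] at h2g
      norm_num at h2g
    · exact h
end

section
/- Let n > 2 and let v ∈ ℤⁿ be nonzero with coprime coordinates. Write the reflection R_v = I − 2vv^T/(v^T v) as (1/q)T_v with T_v an integer matrix with gcd 1 (so q = v^T v if v^T v is odd, q = v^T v/2 otherwise). Then the second diagonal element q_2 of the Smith normal form of T_v equals q. -/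
open Matrix

/-- The reflection matrix R_v = I − 2vvᵀ/(vᵀv) of ℝⁿ (here over ℚ, for integral v). -/
noncomputable def reflMat {n : ℕ} (v : Fin n → ℤ) : Matrix (Fin n) (Fin n) ℚ :=
  1 - ((2 : ℚ) / (∑ i, (v i : ℚ) ^ 2)) •
    Matrix.vecMulVec (fun i => (v i : ℚ)) (fun i => (v i : ℚ))

theorem snf_second_diag_of_reflection {n : ℕ} (hn : 2 < n) (v : Fin n → ℤ) (hv : v ≠ 0)
    (hgcd : Finset.univ.gcd v = 1) (q : ℕ) (hq : 0 < q)
    (T : Matrix (Fin n) (Fin n) ℤ) (hT : gcdEntries T = 1)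
    (hRT : reflMat v = ((1 : ℚ) / (q : ℚ)) • T.map (fun a => (a : ℚ)))
    (d : Fin n → ℤ) (hdpos : ∀ i, 0 < d i)
    (hchain : ∀ i j : Fin n, i ≤ j → d i ∣ d j)
    (P Q : Matrix (Fin n) (Fin n) ℤ) (hP : IsUnit P.det) (hQ : IsUnit Q.det)
    (hSNF : P * T * Q = Matrix.diagonal d) :
    d ⟨1, by omega⟩ = (q : ℤ) := by
  have hq' : (0:ℤ) < (q:ℤ) := by exact_mod_cast hq
  set i0 : Fin n := ⟨0, by omega⟩ with hi0
  set i1 : Fin n := ⟨1, by omega⟩ with hi1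
  set s : ℤ := ∑ i, v i ^ 2 with hs_def
  have hs0 : 0 < s := by
    obtain ⟨i, hi⟩ := Function.ne_iff.mp hv
    have hi' : v i ≠ 0 := by simpa using hi
    have h1 : v i ^ 2 ≤ s := Finset.single_le_sum (f := fun i => v i ^ 2)
      (fun i _ => sq_nonneg _) (Finset.mem_univ i)
    have h2 : 0 < v i ^ 2 := lt_of_le_of_ne (sq_nonneg _) (Ne.symm (pow_ne_zero 2 hi'))
    omega
  have hsQ : ((s:ℚ)) ≠ 0 := by exact_mod_cast hs0.ne'
  have hqQ : ((q:ℚ)) ≠ 0 := by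
    simpa using (Nat.cast_pos (α := ℚ)).mpr hq |>.ne'
  have hsumQ : (∑ i, (v i : ℚ) ^ 2) = ((s : ℤ) : ℚ) := by push_cast [hs_def]; ring
  -- entrywise identity over ℤ
  have hB : ∀ i j, s * T i j = (q:ℤ) * s * (if i = j then 1 else 0) - 2 * q * (v i * v j) := by
    intro i j
    have h := congrFun (congrFun hRT i) j
    simp only [reflMat, Matrix.sub_apply, Matrix.one_apply, Matrix.smul_apply,
      Matrix.vecMulVec_apply, Matrix.map_apply, smul_eq_mul, hsumQ] at h
    by_cases hij : i = j
    · simp only [if_pos hij] at h ⊢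
      have key : (s:ℚ) * (T i j : ℚ) = (q:ℚ) * (s:ℚ) * 1 - 2 * (q:ℚ) * ((v i : ℚ) * (v j : ℚ)) := by
        field_simp at h
        linear_combination -h
      have : ((s * T i j : ℤ) : ℚ) = (((q:ℤ) * s * 1 - 2 * q * (v i * v j) : ℤ) : ℚ) := by
        push_cast
        linear_combination key
      exact_mod_cast this
    · simp only [if_neg hij] at h ⊢
      have key : (s:ℚ) * (T i j : ℚ) = (q:ℚ) * (s:ℚ) * 0 - 2 * (q:ℚ) * ((v i : ℚ) * (v j : ℚ)) := by
        field_simp at h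
        linear_combination -h
      have : ((s * T i j : ℤ) : ℚ) = (((q:ℤ) * s * 0 - 2 * q * (v i * v j) : ℤ) : ℚ) := by
        push_cast
        linear_combination key
      exact_mod_cast this
  -- s ∣ 2q
  have hsdvd : s ∣ 2 * (q:ℤ) := by
    have hdvd2 : ∀ i j, s ∣ 2 * (q:ℤ) * v i * v j := by
      intro i j
      exact ⟨(q:ℤ) * (if i = j then 1 else 0) - T i j, by linear_combination hB i j⟩
    have step1 : ∀ i, s ∣ 2 * (q:ℤ) * v i := by
      intro i
      have h1 : s ∣ Finset.univ.gcd (fun j => 2 * (q:ℤ) * v i * v j) :=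
        Finset.dvd_gcd (fun j _ => hdvd2 i j)
      rwa [Finset.gcd_mul_left, hgcd, mul_one, dvd_normalize_iff] at h1
    have h2 : s ∣ Finset.univ.gcd (fun i => 2 * (q:ℤ) * v i) :=
      Finset.dvd_gcd (fun i _ => step1 i)
    rwa [Finset.gcd_mul_left, hgcd, mul_one, dvd_normalize_iff] at h2
  obtain ⟨m, hm⟩ := hsdvd
  -- integer entry formula
  have hTij : ∀ i j, T i j = (q:ℤ) * (if i = j then 1 else 0) - m * (v i * v j) := by
    intro i j
    exact mul_left_cancel₀ hs0.ne'
      (by linear_combination hB i j - (v i * v j) * hm :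
        s * T i j = s * ((q:ℤ) * (if i = j then 1 else 0) - m * (v i * v j)))
  set W : Matrix (Fin n) (Fin n) ℤ := Matrix.vecMulVec v v with hW
  have hTmat : T = (q:ℤ) • (1 : Matrix (Fin n) (Fin n) ℤ) - m • W := by
    ext i j
    simp only [Matrix.sub_apply, Matrix.smul_apply, Matrix.one_apply, hW,
      Matrix.vecMulVec_apply, smul_eq_mul, hTij i j, mul_ite, mul_one, mul_zero]
  have hWW : W * W = s • W := by
    ext i j
    simp only [Matrix.mul_apply, hW, Matrix.vecMulVec_apply, Matrix.smul_apply, smul_eq_mul]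
    calc ∑ k, v i * v k * (v k * v j) = ∑ k, (v i * v j) * v k ^ 2 := by
          apply Finset.sum_congr rfl; intro k _; ring
      _ = s * (v i * v j) := by rw [← Finset.mul_sum]; ring
  have hTT : T * T = ((q:ℤ)^2) • (1 : Matrix (Fin n) (Fin n) ℤ) := by
    rw [hTmat]
    simp only [sub_mul, mul_sub, Matrix.smul_mul, Matrix.mul_smul, Matrix.one_mul,
      Matrix.mul_one, hWW, smul_smul]
    match_scalars
    · ring
    · linear_combination (-(m : ℤ)) * hm
  -- inverses
  have hPP : P⁻¹ * P = 1 := Matrix.nonsing_inv_mul P hP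
  have hQQ : Q * Q⁻¹ = 1 := Matrix.mul_nonsing_inv Q hQ
  -- d i0 = 1
  have hd0 : d i0 = 1 := by
    have hT' : T = P⁻¹ * Matrix.diagonal d * Q⁻¹ := by
      rw [← hSNF]
      simp only [Matrix.mul_assoc]
      rw [hQQ, Matrix.mul_one, Matrix.nonsing_inv_mul_cancel_left _ _ hP]
    have hdvdT : ∀ i j, d i0 ∣ T i j := by
      intro i j
      rw [hT', Matrix.mul_apply]
      simp only [Matrix.mul_diagonal]
      apply Finset.dvd_sum
      intro k _
      have : d i0 ∣ d k := hchain i0 k (by simp [hi0, Fin.le_def])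
      exact Dvd.dvd.mul_right (this.mul_left _) _
    have hdg : d i0 ∣ gcdEntries T :=
      Finset.dvd_gcd (fun p _ => hdvdT p.1 p.2)
    rw [hT] at hdg
    exact Int.eq_one_of_dvd_one (hdpos i0).le hdg
  -- D entries
  have hPW : P * W = Matrix.vecMulVec (P.mulVec v) v := by
    ext i j
    simp only [Matrix.mul_apply, hW, Matrix.vecMulVec_apply, Matrix.mulVec, dotProduct]
    rw [Finset.sum_mul]
    apply Finset.sum_congr rfl; intro k _; ring
  have hWQ : Matrix.vecMulVec (P.mulVec v) v * Q
      = Matrix.vecMulVec (P.mulVec v) (Matrix.vecMul v Q) := by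
    ext i j
    simp only [Matrix.mul_apply, Matrix.vecMulVec_apply, Matrix.vecMul, dotProduct]
    rw [Finset.mul_sum]
    apply Finset.sum_congr rfl; intro k _; ring
  have hDmat : Matrix.diagonal d = (q:ℤ) • (P * Q)
      - m • Matrix.vecMulVec (P.mulVec v) (Matrix.vecMul v Q) := by
    rw [← hSNF, hTmat]
    simp only [mul_sub, sub_mul, Matrix.mul_smul, Matrix.smul_mul, Matrix.mul_one]
    rw [hPW, hWQ]
  have hD : ∀ i j, Matrix.diagonal d i j
      = (q:ℤ) * (P*Q) i j - m * (P.mulVec v i * Matrix.vecMul v Q j) := by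
    intro i j
    rw [hDmat]
    simp only [Matrix.sub_apply, Matrix.smul_apply, Matrix.vecMulVec_apply, smul_eq_mul]
  have hne01 : i0 ≠ i1 := by simp [hi0, hi1, Fin.ext_iff]
  -- part 1 : q ∣ d i1
  have hpart1 : (q:ℤ) ∣ d i1 := by
    have E00 := hD i0 i0
    have E01 := hD i0 i1
    have E11 := hD i1 i1
    rw [Matrix.diagonal_apply_eq, hd0] at E00
    rw [Matrix.diagonal_apply_ne _ hne01] at E01
    rw [Matrix.diagonal_apply_eq] at E11
    set a := (P*Q) i0 i0
    set b := (P*Q) i0 i1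
    set e := (P*Q) i1 i1
    set w0 := P.mulVec v i0
    set w1 := P.mulVec v i1
    set u0 := Matrix.vecMul v Q i0
    set u1 := Matrix.vecMul v Q i1
    exact ⟨a * d i1 - e * (m * w0 * u0) + b * (m * w1 * u0), by
      linear_combination d i1 * E00 - (m * w0 * u0) * E11 + (m * w1 * u0) * E01⟩
  -- part 2 : d i1 ∣ q
  have hpart2 : d i1 ∣ (q:ℤ) := by
    have hDAD : Matrix.diagonal d * (Q⁻¹ * P⁻¹) * Matrix.diagonal d = ((q:ℤ)^2) • (P * Q) := by
      rw [← hSNF]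
      calc P * T * Q * (Q⁻¹ * P⁻¹) * (P * T * Q)
          = P * (T * T) * Q := by
            simp only [Matrix.mul_assoc]
            rw [Matrix.nonsing_inv_mul_cancel_left _ _ hP,
              Matrix.mul_nonsing_inv_cancel_left _ _ hQ]
        _ = ((q:ℤ)^2) • (P * Q) := by
            rw [hTT, Matrix.mul_smul, Matrix.mul_one, Matrix.smul_mul]
    have hE : ∀ i j, d i * (Q⁻¹ * P⁻¹) i j * d j = (q:ℤ)^2 * (P*Q) i j := by
      intro i j
      have h := congrFun (congrFun hDAD i) j
      simpa only [Matrix.mul_diagonal, Matrix.diagonal_mul, Matrix.smul_apply,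
        smul_eq_mul] using h
    have hblock : ∀ i j : Fin n, i ≠ i0 → j ≠ i0 → d i1 ^ 2 ∣ (q:ℤ)^2 * (P*Q) i j := by
      intro i j hi hj
      rw [← hE i j]
      have h1 : d i1 ∣ d i := hchain i1 i (by
        rw [Fin.le_def]
        have : i.val ≠ 0 := fun h => hi (by simp [hi0, Fin.ext_iff, h])
        simp only [hi1]
        omega)
      have h2 : d i1 ∣ d j := hchain i1 j (by
        rw [Fin.le_def]
        have : j.val ≠ 0 := fun h => hj (by simp [hi0, Fin.ext_iff, h])
        simp only [hi1]
        omega)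
      rw [sq]
      exact mul_dvd_mul (h1.mul_right _) h2
    set S : Finset (Fin n × Fin n) := (Finset.univ.erase i0) ×ˢ (Finset.univ.erase i0) with hS
    set g : ℤ := S.gcd (fun p => (P*Q) p.1 p.2) with hg
    have hgdet : g ∣ (P*Q).det := by
      rw [Matrix.det_apply']
      apply Finset.dvd_sum
      intro σ _
      have hex : ∃ i : Fin n, σ i ≠ i0 ∧ i ≠ i0 := by
        by_contra hcon
        push_neg at hcon
        have h1 : σ i1 = i0 := by
          by_contra h; exact (Ne.symm hne01) (hcon i1 h)
        have h2 : σ ⟨2, by omega⟩ = i0 := by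
          by_contra h
          exact absurd (hcon ⟨2, by omega⟩ h) (by simp [hi0, Fin.ext_iff])
        have h3 : (i1 : Fin n) = ⟨2, by omega⟩ := σ.injective (h1.trans h2.symm)
        rw [hi1, Fin.ext_iff] at h3
        simp at h3
      obtain ⟨i, hσi, hi⟩ := hex
      have hmem : (σ i, i) ∈ S := by
        rw [hS, Finset.mem_product]
        exact ⟨Finset.mem_erase.mpr ⟨hσi, Finset.mem_univ _⟩,
          Finset.mem_erase.mpr ⟨hi, Finset.mem_univ _⟩⟩
      have h1 : g ∣ (P*Q) (σ i) i := Finset.gcd_dvd hmem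
      exact Dvd.dvd.mul_left
        (h1.trans (Finset.dvd_prod_of_mem (fun j => (P*Q) (σ j) j) (Finset.mem_univ i))) _
    have hg1 : g ∣ 1 := by
      have hdet : IsUnit (P*Q).det := by
        rw [Matrix.det_mul]; exact hP.mul hQ
      rcases Int.isUnit_iff.mp hdet with h | h
      · rwa [h] at hgdet
      · rw [h] at hgdet; exact (dvd_neg).mp hgdet
    have hd2 : d i1 ^ 2 ∣ (q:ℤ)^2 * g := by
      have h1 : d i1 ^ 2 ∣ S.gcd (fun p => (q:ℤ)^2 * (P*Q) p.1 p.2) := by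
        apply Finset.dvd_gcd
        intro p hp
        rw [hS, Finset.mem_product, Finset.mem_erase, Finset.mem_erase] at hp
        exact hblock p.1 p.2 hp.1.1 hp.2.1
      rwa [Finset.gcd_mul_left, Int.normalize_of_nonneg (by positivity)] at h1
    have hfin : d i1 ^ 2 ∣ (q:ℤ)^2 := by
      have := hd2.trans (mul_dvd_mul_left ((q:ℤ)^2) hg1)
      rwa [mul_one] at this
    exact (Int.pow_dvd_pow_iff two_ne_zero).mp hfin
  exact Int.dvd_antisymm (hdpos i1).le hq'.le hpart2 hpart1
end

section
/- Let v = (a_1,...,a_n) be a nonzero integer vector. The gcd of the determinants of all 2×2 minors of the matrix (v^T v)I − 2vv^T is divisible by v^T v. -/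
open Matrix

/-- The gcd of the determinants of all m×m minors of Z. -/
noncomputable def gcdMinors {n : ℕ} (m : ℕ) (Z : Matrix (Fin n) (Fin n) ℤ) : ℤ :=
  Finset.univ.gcd (fun p : (Fin m ↪ Fin n) × (Fin m ↪ Fin n) => (Z.submatrix p.1 p.2).det)

theorem norm_dvd_gcd_two_minors {n : ℕ} (v : Fin n → ℤ) (hv : v ≠ 0) :
    (∑ i, v i * v i) ∣
      gcdMinors 2 ((∑ i, v i * v i) • (1 : Matrix (Fin n) (Fin n) ℤ)
        - 2 • Matrix.vecMulVec v v) := by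
  set N : ℤ := ∑ i, v i * v i with hN
  apply Finset.dvd_gcd
  intro p _
  have key : ∀ i j : Fin n,
      ((N • (1 : Matrix (Fin n) (Fin n) ℤ) - 2 • Matrix.vecMulVec v v) i j)
        ≡ (-2) * (v i * v j) [ZMOD N] := by
    intro i j
    have he : ((N • (1 : Matrix (Fin n) (Fin n) ℤ) - 2 • Matrix.vecMulVec v v) i j)
        = N * (if i = j then 1 else 0) + (-2) * (v i * v j) := by
      simp only [Matrix.sub_apply, Matrix.smul_apply, Matrix.one_apply,
        Matrix.vecMulVec_apply, smul_eq_mul]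
      split_ifs <;> ring
    rw [he]
    have h0 : N * (if i = j then 1 else 0) ≡ 0 [ZMOD N] :=
      Int.modEq_zero_iff_dvd.mpr (Dvd.intro _ rfl)
    simpa using h0.add_right ((-2) * (v i * v j))
  rw [Matrix.det_fin_two]
  simp only [Matrix.submatrix_apply]
  have h := ((key (p.1 0) (p.2 0)).mul (key (p.1 1) (p.2 1))).sub
    ((key (p.1 0) (p.2 1)).mul (key (p.1 1) (p.2 0)))
  have hz : (-2) * (v (p.1 0) * v (p.2 0)) * ((-2) * (v (p.1 1) * v (p.2 1)))
      - (-2) * (v (p.1 0) * v (p.2 1)) * ((-2) * (v (p.1 1) * v (p.2 0))) = 0 := by ring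
  rw [hz] at h
  exact Int.modEq_zero_iff_dvd.mp h
end

section
/- Let v ∈ ℤⁿ be nonzero with gcd of coordinates 1, and let R_v = I − 2vv^T/(v^T v) be the corresponding reflection. Then the coincidence index Σ(R_v) = [ℤⁿ : ℤⁿ ∩ R_v ℤⁿ] equals v^T v if v^T v is odd, and v^T v / 2 if v^T v is even. -/
open Matrix

/-- The hypercubic lattice ℤⁿ inside ℚⁿ. -/
def intLattice (n : ℕ) : AddSubgroup (Fin n → ℚ) where
  carrier := Set.range (fun z : Fin n → ℤ => fun i => (z i : ℚ))
  add_mem' := by rintro a b ⟨x, rfl⟩ ⟨y, rfl⟩; exact ⟨x + y, by funext i; simp⟩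
  zero_mem' := ⟨0, by funext i; simp⟩
  neg_mem' := by rintro a ⟨x, rfl⟩; exact ⟨-x, by funext i; simp⟩

/-- The coincidence index Σ(Y) = [ℤⁿ : ℤⁿ ∩ Y ℤⁿ]. -/
noncomputable def coincidenceIndex {n : ℕ} (Y : Matrix (Fin n) (Fin n) ℚ) : ℕ :=
  AddSubgroup.relIndex
    (AddSubgroup.map (Matrix.mulVecLin Y).toAddMonoidHom (intLattice n)) (intLattice n)

lemma mem_intLattice_iff {n : ℕ} {q : Fin n → ℚ} :
    q ∈ intLattice n ↔ ∀ i, ∃ m : ℤ, q i = m := by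
  constructor
  · rintro ⟨z, rfl⟩ i; exact ⟨z i, rfl⟩
  · intro h
    choose z hz using h
    exact ⟨z, funext fun i => (hz i).symm⟩

/-- The coercion `ℤⁿ → ℚⁿ` as an `AddMonoidHom`. -/
def intCastHom (n : ℕ) : (Fin n → ℤ) →+ (Fin n → ℚ) :=
  AddMonoidHom.mk' (fun z i => (z i : ℚ)) (by intro a b; funext i; simp)

lemma range_intCastHom (n : ℕ) : (intCastHom n).range = intLattice n := by
  ext q
  constructor
  · rintro ⟨z, rfl⟩; exact ⟨z, rfl⟩
  · rintro ⟨z, rfl⟩; exact ⟨z, rfl⟩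

theorem index_of_reflection {n : ℕ} (v : Fin n → ℤ) (hv : v ≠ 0)
    (hgcd : Finset.univ.gcd v = 1) :
    (coincidenceIndex (reflMat v) : ℤ) =
      if Odd (∑ i, v i * v i) then ∑ i, v i * v i else (∑ i, v i * v i) / 2 := by
  set N : ℤ := ∑ i, v i * v i with hNdef
  obtain ⟨i₀, hi₀⟩ : ∃ i, v i ≠ 0 := by
    by_contra h; push_neg at h; exact hv (funext h)
  have hNpos : 0 < N :=
    Finset.sum_pos' (fun i _ => mul_self_nonneg _)
      ⟨i₀, Finset.mem_univ _, mul_self_pos.mpr hi₀⟩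
  have hN' : (∑ i, (v i : ℚ) ^ 2) = (N : ℚ) := by
    rw [hNdef]; push_cast
    exact Finset.sum_congr rfl fun i _ => sq (v i : ℚ)
  have hNQ : (N : ℚ) ≠ 0 := by exact_mod_cast hNpos.ne'
  -- mulVec formula
  have hmul : ∀ x : Fin n → ℚ, reflMat v *ᵥ x =
      fun i => x i - 2 / (N : ℚ) * (∑ j, (v j : ℚ) * x j) * (v i : ℚ) := by
    intro x; funext i
    have hvmv : (Matrix.vecMulVec (fun i => (v i : ℚ)) (fun i => (v i : ℚ)) *ᵥ x) i
        = (v i : ℚ) * ∑ j, (v j : ℚ) * x j := by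
      simp only [Matrix.mulVec, Matrix.vecMulVec_apply, dotProduct, Finset.mul_sum]
      exact Finset.sum_congr rfl fun j _ => by ring
    rw [reflMat, hN', Matrix.sub_mulVec, Matrix.smul_mulVec, Matrix.one_mulVec]
    simp only [Pi.sub_apply, Pi.smul_apply, hvmv, smul_eq_mul]
    ring
  -- involution
  have hinv : ∀ x : Fin n → ℚ, reflMat v *ᵥ (reflMat v *ᵥ x) = x := by
    intro x
    rw [hmul, hmul]
    funext i
    set S := ∑ j, (v j : ℚ) * x j with hS
    have hsum : (∑ j, (v j : ℚ) * (x j - 2 / (N : ℚ) * S * (v j : ℚ))) = -S := by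
      have : ∀ j ∈ Finset.univ, (v j : ℚ) * (x j - 2 / (N : ℚ) * S * (v j : ℚ))
          = (v j : ℚ) * x j - 2 / (N : ℚ) * S * (v j : ℚ) ^ 2 := fun j _ => by ring
      rw [Finset.sum_congr rfl this, Finset.sum_sub_distrib, ← Finset.mul_sum, hN', ← hS]
      field_simp
      ring
    simp only [hsum]
    ring
  -- key membership characterization
  have hmem : ∀ z : Fin n → ℤ,
      ((fun i => (z i : ℚ)) ∈ AddSubgroup.map (Matrix.mulVecLin (reflMat v)).toAddMonoidHom
        (intLattice n)) ↔ N ∣ 2 * ∑ i, v i * z i := by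
    intro z
    set S : ℤ := ∑ i, v i * z i with hSdef
    have hT : ((S : ℚ)) = ∑ j, (v j : ℚ) * (z j : ℚ) := by rw [hSdef]; push_cast; rfl
    constructor
    · rintro ⟨y, hy, hyz⟩
      have hyz' : reflMat v *ᵥ y = fun i => (z i : ℚ) := hyz
      have hyR : reflMat v *ᵥ (fun i => (z i : ℚ)) = y := by
        rw [← hyz', hinv]
      rw [← hyR, SetLike.mem_coe, mem_intLattice_iff] at hy
      have hdvd : ∀ i, N ∣ 2 * S * v i := by
        intro i
        obtain ⟨m, hm⟩ := hy i
        rw [hmul] at hm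
        simp only [← hT] at hm
        have h2 : (2 * S * v i : ℚ) = ((z i - m) * N : ℚ) := by
          field_simp at hm ⊢
          linarith
        have h3 : 2 * S * v i = (z i - m) * N := by exact_mod_cast h2
        exact ⟨z i - m, by linarith [h3]⟩
      have : N ∣ Finset.univ.gcd (fun i => 2 * S * v i) :=
        Finset.dvd_gcd fun i _ => hdvd i
      rwa [Finset.gcd_mul_left, hgcd, mul_one, dvd_normalize_iff] at this
    · intro hdvd
      obtain ⟨k, hk⟩ := hdvd
      refine ⟨reflMat v *ᵥ (fun i => (z i : ℚ)), ?_, ?_⟩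
      · rw [SetLike.mem_coe, mem_intLattice_iff]
        intro i
        refine ⟨z i - k * v i, ?_⟩
        rw [hmul]
        simp only [← hT]
        have hkQ : (2 : ℚ) * S = N * k := by exact_mod_cast hk
        push_cast
        field_simp
        linear_combination (-(v i : ℚ)) * hkQ
      · show Matrix.mulVecLin (reflMat v) (reflMat v *ᵥ fun i => (z i : ℚ)) = _
        rw [Matrix.mulVecLin_apply, hinv]
  -- the natural number modulus
  set m : ℕ := N.toNat with hmdef
  have hm : (m : ℤ) = N := Int.toNat_of_nonneg hNpos.le
  haveI : NeZero m := ⟨by omega⟩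
  -- the homomorphism to ZMod m
  have hsum_add : ∀ a b : Fin n → ℤ, (∑ i, v i * (a + b) i)
      = (∑ i, v i * a i) + ∑ i, v i * b i := by
    intro a b
    rw [← Finset.sum_add_distrib]
    exact Finset.sum_congr rfl fun i _ => by simp [mul_add]
  let φ : (Fin n → ℤ) →+ ZMod m :=
    AddMonoidHom.mk' (fun z => ((2 * ∑ i, v i * z i : ℤ) : ZMod m))
      (by
        intro a b
        show ((2 * ∑ i, v i * (a + b) i : ℤ) : ZMod m) = _
        rw [hsum_add]; push_cast; ring)
  -- Bezout: 1 is an integer combination of the v i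
  obtain ⟨z₀, hz₀⟩ : ∃ z : Fin n → ℤ, ∑ i, v i * z i = 1 := by
    let g : (Fin n → ℤ) →+ ℤ :=
      AddMonoidHom.mk' (fun z => ∑ i, v i * z i)
        (by intro a b; show (∑ i, v i * (a + b) i) = _; rw [hsum_add])
    obtain ⟨a, ha⟩ := Int.subgroup_cyclic g.range
    have hva : ∀ i, a ∣ v i := by
      intro i
      have hvi : v i ∈ g.range := ⟨(Pi.single i 1 : Fin n → ℤ), by
        show (∑ j, v j * (Pi.single i 1 : Fin n → ℤ) j) = v i
        simp [Pi.single_apply, mul_ite]⟩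
      rw [ha, AddSubgroup.mem_closure_singleton] at hvi
      obtain ⟨k, hk⟩ := hvi
      exact ⟨k, by rw [← hk]; rw [smul_eq_mul]; ring⟩
    have ha1 : a ∣ 1 := hgcd ▸ Finset.dvd_gcd (fun i _ => hva i)
    have h1 : (1 : ℤ) ∈ g.range := by
      rw [ha, AddSubgroup.mem_closure_singleton]
      obtain ⟨u, hu⟩ := ha1
      exact ⟨u, by rw [smul_eq_mul, mul_comm]; exact hu.symm⟩
    obtain ⟨z, hz⟩ := h1
    exact ⟨z, hz⟩
  -- kernel computation
  have hker : AddSubgroup.comap (intCastHom n)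
      (AddSubgroup.map (Matrix.mulVecLin (reflMat v)).toAddMonoidHom (intLattice n)) = φ.ker := by
    ext z
    rw [AddSubgroup.mem_comap, AddMonoidHom.mem_ker]
    show ((fun i => (z i : ℚ)) ∈ _) ↔ _
    rw [hmem z]
    show _ ↔ ((2 * ∑ i, v i * z i : ℤ) : ZMod m) = 0
    rw [ZMod.intCast_zmod_eq_zero_iff_dvd, hm]
  -- range computation
  have hrange : φ.range = AddSubgroup.zmultiples (2 : ZMod m) := by
    ext x
    rw [AddSubgroup.mem_zmultiples_iff]
    constructor
    · rintro ⟨z, rfl⟩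
      refine ⟨∑ i, v i * z i, ?_⟩
      show ((∑ i, v i * z i : ℤ)) • (2 : ZMod m) = ((2 * ∑ i, v i * z i : ℤ) : ZMod m)
      rw [zsmul_eq_mul]
      push_cast
      ring
    · rintro ⟨k, rfl⟩
      refine ⟨k • z₀, ?_⟩
      show ((2 * ∑ i, v i * (k • z₀) i : ℤ) : ZMod m) = k • (2 : ZMod m)
      have : (∑ i, v i * (k • z₀) i) = k := by
        have : ∀ i ∈ Finset.univ, v i * (k • z₀) i = k * (v i * z₀ i) := fun i _ => by
          simp [smul_eq_mul]; ring
        rw [Finset.sum_congr rfl this, ← Finset.mul_sum, hz₀, mul_one]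
      rw [this, zsmul_eq_mul]
      push_cast
      ring
  -- compute the index
  have hidx : coincidenceIndex (reflMat v) = m / Nat.gcd m 2 := by
    have hic := AddSubgroup.index_comap
      (AddSubgroup.map (Matrix.mulVecLin (reflMat v)).toAddMonoidHom (intLattice n))
      (intCastHom n)
    rw [range_intCastHom] at hic
    rw [coincidenceIndex, ← hic, hker, AddSubgroup.index_ker, hrange, Nat.card_zmultiples]
    have h2 : (2 : ZMod m) = ((2 : ℕ) : ZMod m) := by push_cast; rfl
    rw [h2, ZMod.addOrderOf_coe 2 (NeZero.ne m)]
  rw [hidx]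
  rcases Int.even_or_odd N with hpar | hpar
  · rw [if_neg (Int.not_odd_iff_even.mpr hpar)]
    have hmeven : 2 ∣ m := by
      obtain ⟨c, hc⟩ := hpar
      refine ⟨c.toNat, ?_⟩
      omega
    obtain ⟨c, hc⟩ := hmeven
    have : Nat.gcd m 2 = 2 := by
      rw [Nat.gcd_comm, Nat.gcd_eq_left ⟨c, hc⟩]
    rw [this]
    omega
  · rw [if_pos hpar]
    have hmodd : Odd m := by
      rcases hpar with ⟨c, hc⟩
      exact ⟨c.toNat, by omega⟩
    rw [Nat.Coprime.gcd_eq_one (Nat.coprime_two_right.mpr hmodd)]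
    omega
end

section
/- Let v_1,...,v_k ∈ ℤⁿ be nonzero vectors each with coprime coordinates, and set r_i = v_i^T v_i if v_i^T v_i is odd, r_i = v_i^T v_i/2 otherwise. If gcd(r_i, r_j) = 1 for all i ≠ j, then the coincidence index of the product of reflections satisfies Σ(R_{v_1} ⋯ R_{v_k}) = r_1 ⋯ r_k. -/
open Matrix

namespace CoincAux


variable {n : ℕ}

def e (n : ℕ) : (Fin n → ℤ) →+ (Fin n → ℚ) where
  toFun z := fun i => (z i : ℚ)
  map_zero' := by funext i; simp
  map_add' x y := by funext i; simp

lemma e_injective : Function.Injective (e n) := by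
  intro x y h
  funext i
  have := congrFun h i
  simpa [e] using this

lemma range_e : (e n).range = intLattice n := by
  ext x; constructor
  · rintro ⟨z, rfl⟩; exact ⟨z, rfl⟩
  · rintro ⟨z, rfl⟩; exact ⟨z, rfl⟩

noncomputable def S (Y : Matrix (Fin n) (Fin n) ℚ) : AddSubgroup (Fin n → ℤ) :=
  AddSubgroup.comap (e n)
    (AddSubgroup.map (Matrix.mulVecLin Y).toAddMonoidHom (intLattice n))

lemma coincidenceIndex_eq (Y : Matrix (Fin n) (Fin n) ℚ) :
    coincidenceIndex Y = (S Y).index := by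
  rw [S, AddSubgroup.index_comap, range_e, coincidenceIndex]

lemma mem_S_iff {Y W : Matrix (Fin n) (Fin n) ℚ} (hYW : Y * W = 1) (z : Fin n → ℤ) :
    z ∈ S Y ↔ W.mulVec (e n z) ∈ intLattice n := by
  have hWY : W * Y = 1 := mul_eq_one_comm.mp hYW
  constructor
  · rintro ⟨w, hw, hwz⟩
    have : W.mulVec (e n z) = w := by
      rw [← hwz]
      simp [Matrix.mulVec_mulVec, hWY]
    rwa [this]
  · intro h
    exact ⟨W.mulVec (e n z), h, by simp [Matrix.mulVec_mulVec, hYW]⟩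


variable {n : ℕ}

lemma exists_pull {A W : Matrix (Fin n) (Fin n) ℚ} (hAW : A * W = 1) (z : S A) :
    ∃ w : Fin n → ℤ, e n w = W.mulVec (e n (z : Fin n → ℤ)) := by
  have h := (mem_S_iff hAW (z : Fin n → ℤ)).mp z.2
  rw [← range_e] at h
  exact h

noncomputable def pull {A W : Matrix (Fin n) (Fin n) ℚ} (hAW : A * W = 1) :
    S A →+ (Fin n → ℤ) where
  toFun z := (exists_pull hAW z).choose
  map_zero' := e_injective <| by
    rw [(exists_pull hAW 0).choose_spec]
    simp
  map_add' x y := e_injective <| by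
    rw [map_add, (exists_pull hAW x).choose_spec, (exists_pull hAW y).choose_spec,
      (exists_pull hAW (x + y)).choose_spec, AddSubgroup.coe_add, map_add,
      Matrix.mulVec_add]

lemma pull_spec {A W : Matrix (Fin n) (Fin n) ℚ} (hAW : A * W = 1) (z : S A) :
    e n (pull hAW z) = W.mulVec (e n (z : Fin n → ℤ)) :=
  (exists_pull hAW z).choose_spec

lemma S_mul_index_dvd {A W B W' : Matrix (Fin n) (Fin n) ℚ}
    (hAW : A * W = 1) (hBW' : B * W' = 1) :
    (S (A * B)).index ∣ (S A).index * (S B).index := by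
  have hABW : (A * B) * (W' * W) = 1 := by
    rw [show A * B * (W' * W) = A * (B * W') * W by noncomm_ring, hBW', mul_one, hAW]
  have key : (S (A * B)).addSubgroupOf (S A) = AddSubgroup.comap (pull hAW) (S B) := by
    ext z
    rw [AddSubgroup.mem_addSubgroupOf, AddSubgroup.mem_comap, mem_S_iff hABW,
      mem_S_iff hBW', pull_spec hAW z, ← Matrix.mulVec_mulVec]
  have h1 : (S (A * B)).index ∣ (S (A * B) ⊓ S A).index :=
    AddSubgroup.index_dvd_of_le inf_le_left
  have h2 : (S (A * B) ⊓ S A).index = (S (A * B)).relIndex (S A) * (S A).index := by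
    rw [← AddSubgroup.inf_relIndex_right, AddSubgroup.relIndex_mul_index inf_le_right]
  have h3 : (S (A * B)).relIndex (S A) ∣ (S B).index := by
    rw [AddSubgroup.relIndex, key, AddSubgroup.index_comap]
    exact AddSubgroup.relIndex_dvd_index_of_normal _ _
  rw [h2] at h1
  calc (S (A * B)).index ∣ (S (A * B)).relIndex (S A) * (S A).index := h1
    _ ∣ (S B).index * (S A).index := mul_dvd_mul_right h3 _
    _ = (S A).index * (S B).index := Nat.mul_comm _ _


variable {n : ℕ}

lemma vecMulVec_mulVec (w u x : Fin n → ℚ) :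
    (Matrix.vecMulVec w u).mulVec x = (u ⬝ᵥ x) • w := by
  funext j
  simp only [Matrix.mulVec, dotProduct, Matrix.vecMulVec_apply, Pi.smul_apply,
    smul_eq_mul]
  rw [Finset.sum_mul]
  exact Finset.sum_congr rfl fun i _ => by ring

lemma sum_sq_eq (v : Fin n → ℤ) :
    (∑ i, (v i : ℚ) ^ 2) = ((∑ i, v i * v i : ℤ) : ℚ) := by
  push_cast
  exact Finset.sum_congr rfl fun i _ => sq (v i : ℚ)

lemma m_pos {v : Fin n → ℤ} (hv : v ≠ 0) : 0 < ∑ i, v i * v i := by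
  obtain ⟨i, hi⟩ := Function.ne_iff.mp hv
  exact Finset.sum_pos' (fun j _ => mul_self_nonneg _)
    ⟨i, Finset.mem_univ i, mul_self_pos.mpr hi⟩

lemma reflMat_mulVec (v : Fin n → ℤ) (x : Fin n → ℚ) :
    (reflMat v).mulVec x = x -
      (2 / ((∑ i, v i * v i : ℤ) : ℚ) * ((fun i => (v i : ℚ)) ⬝ᵥ x)) •
        (fun i => (v i : ℚ)) := by
  rw [reflMat, Matrix.sub_mulVec, Matrix.one_mulVec, Matrix.smul_mulVec,
    vecMulVec_mulVec, smul_smul, sum_sq_eq]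

lemma dot_self_eq (v : Fin n → ℤ) :
    (fun i => (v i : ℚ)) ⬝ᵥ (fun i => (v i : ℚ)) = ((∑ i, v i * v i : ℤ) : ℚ) := by
  simp only [dotProduct]
  push_cast
  rfl

lemma refl_mulVec_mulVec {v : Fin n → ℤ} (hv : v ≠ 0) (x : Fin n → ℚ) :
    (reflMat v).mulVec ((reflMat v).mulVec x) = x := by
  have hm : ((∑ i, v i * v i : ℤ) : ℚ) ≠ 0 := by
    exact_mod_cast (m_pos hv).ne'
  set u : Fin n → ℚ := fun i => (v i : ℚ) with hu
  set m : ℚ := ((∑ i, v i * v i : ℤ) : ℚ) with hmdef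
  rw [reflMat_mulVec, reflMat_mulVec]
  simp only [← hu, ← hmdef, dotProduct_sub, dotProduct_smul, smul_eq_mul,
    dot_self_eq v, ← hmdef]
  set d : ℚ := u ⬝ᵥ x with hd
  have hkey : 2 / m * (d - 2 / m * d * m) = -(2 / m * d) := by
    field_simp
    ring
  rw [show u ⬝ᵥ u = m from dot_self_eq v, hkey, neg_smul, sub_neg_eq_add, sub_add_cancel]

lemma refl_mul_self {v : Fin n → ℤ} (hv : v ≠ 0) : reflMat v * reflMat v = 1 := by
  ext j i
  have h := congrFun (refl_mulVec_mulVec hv (Pi.single i 1)) j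
  rw [Matrix.mulVec_mulVec] at h
  simpa [Matrix.mulVec_single, Pi.single_apply, Matrix.one_apply] using h


lemma den_dvd_of_mul_intCast {c : ℚ} {a b : ℤ} (h : c * (a : ℚ) = (b : ℚ)) :
    (c.den : ℤ) ∣ a := by
  have hden : (c.den : ℚ) ≠ 0 := Nat.cast_ne_zero.mpr c.den_nz
  have hnum : c * (c.den : ℚ) = (c.num : ℚ) := by
    have h0 := Rat.num_div_den c
    rw [div_eq_iff hden] at h0
    linarith
  have h2 : c.num * a = b * c.den := by
    have hq : ((c.num * a : ℤ) : ℚ) = ((b * c.den : ℤ) : ℚ) := by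
      push_cast
      calc (c.num : ℚ) * a = c * (c.den : ℚ) * a := by rw [hnum]
        _ = c * a * (c.den : ℚ) := by ring
        _ = b * (c.den : ℚ) := by rw [h]
    exact_mod_cast hq
  have h3 : (c.den : ℤ) ∣ c.num * a := ⟨b, by linarith⟩
  have hcop : IsCoprime (c.den : ℤ) c.num := by
    rw [Int.isCoprime_iff_gcd_eq_one]
    simpa [Int.gcd] using c.reduced.symm
  exact hcop.dvd_of_dvd_mul_left h3

lemma sub_mem_iff {x y : Fin n → ℚ} (hx : x ∈ intLattice n) :
    x - y ∈ intLattice n ↔ y ∈ intLattice n :=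
  ⟨fun h => by simpa using sub_mem hx h, fun h => sub_mem hx h⟩

lemma mem_S_refl {v : Fin n → ℤ} (hv : v ≠ 0) (hg : Finset.univ.gcd v = 1) (z : Fin n → ℤ) :
    z ∈ S (reflMat v) ↔ (∑ i, v i * v i) ∣ 2 * (v ⬝ᵥ z) := by
  have hm0 : ((∑ i, v i * v i : ℤ) : ℚ) ≠ 0 := by exact_mod_cast (m_pos hv).ne'
  rw [mem_S_iff (refl_mul_self hv), reflMat_mulVec]
  have hez : e n z = fun i => ((z i : ℤ) : ℚ) := rfl
  have hdot : (fun i => (v i : ℚ)) ⬝ᵥ (e n z) = ((v ⬝ᵥ z : ℤ) : ℚ) := by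
    rw [hez]
    simp only [dotProduct]
    push_cast
    rfl
  rw [hdot, sub_mem_iff (show e n z ∈ intLattice n from ⟨z, rfl⟩)]
  set c : ℚ := 2 / ((∑ i, v i * v i : ℤ) : ℚ) * ((v ⬝ᵥ z : ℤ) : ℚ) with hc
  constructor
  · rintro ⟨w, hw⟩
    have hdvd : ∀ i, (c.den : ℤ) ∣ v i := by
      intro i
      have hwi : c * ((v i : ℤ) : ℚ) = ((w i : ℤ) : ℚ) := by
        have h1 := congrFun hw i
        simp only [Pi.smul_apply, smul_eq_mul] at h1
        exact h1.symm
      exact den_dvd_of_mul_intCast hwi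
    have hd1 : (c.den : ℤ) ∣ (1 : ℤ) := hg ▸ Finset.dvd_gcd fun i _ => hdvd i
    have hden1 : c.den = 1 := Nat.dvd_one.mp (by exact_mod_cast hd1)
    have hcnum : (c.num : ℚ) = c := (Rat.den_eq_one_iff c).mp hden1
    have hq : (c.num : ℚ) * ((∑ i, v i * v i : ℤ) : ℚ) = 2 * ((v ⬝ᵥ z : ℤ) : ℚ) := by
      rw [hcnum, hc, div_mul_eq_mul_div, div_mul_cancel₀ _ hm0]
    have hqz : c.num * (∑ i, v i * v i) = 2 * (v ⬝ᵥ z) := by exact_mod_cast hq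
    exact ⟨c.num, by linarith⟩
  · rintro ⟨t, ht⟩
    have hcval : c = (t : ℚ) := by
      rw [hc, div_mul_eq_mul_div, div_eq_iff hm0]
      have : ((2 * (v ⬝ᵥ z) : ℤ) : ℚ) = (((∑ i, v i * v i) * t : ℤ) : ℚ) := by
        exact_mod_cast congrArg (fun x : ℤ => (x : ℚ)) ht
      push_cast at this ⊢
      linarith
    refine ⟨fun i => t * v i, ?_⟩
    funext i
    simp only [Pi.smul_apply, smul_eq_mul, hcval]
    push_cast
    ring


lemma r_pos {m r : ℤ} (hm : 0 < m) (hr : r = if Odd m then m else m / 2) : 0 < r := by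
  by_cases hodd : Odd m
  · rw [hr, if_pos hodd]; exact hm
  · have heven : Even m := Int.not_odd_iff_even.mp hodd
    obtain ⟨j, hj⟩ := heven
    rw [hr, if_neg hodd]
    omega

lemma m_dvd_two_mul_iff {m r : ℤ} (hm : 0 < m) (hr : r = if Odd m then m else m / 2)
    (t : ℤ) : m ∣ 2 * t ↔ r ∣ t := by
  by_cases hodd : Odd m
  · rw [hr, if_pos hodd]
    obtain ⟨j, hj⟩ := hodd
    constructor
    · intro h
      have h1 : t = t * m - j * (2 * t) := by rw [hj]; ring
      rw [h1]
      exact dvd_sub (Dvd.intro_left t rfl) (Dvd.dvd.mul_left h j)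
    · exact fun h => Dvd.dvd.mul_left h 2
  · have heven : Even m := Int.not_odd_iff_even.mp hodd
    obtain ⟨j, hj⟩ := heven
    have hm2 : m = 2 * j := by omega
    have hrj : r = j := by rw [hr, if_neg hodd]; omega
    rw [hm2, hrj]
    exact mul_dvd_mul_iff_left (by norm_num : (2:ℤ) ≠ 0)

def dotHom (v : Fin n → ℤ) : (Fin n → ℤ) →+ ℤ where
  toFun z := v ⬝ᵥ z
  map_zero' := dotProduct_zero v
  map_add' x y := dotProduct_add v x y

lemma dotHom_surj {v : Fin n → ℤ} (hg : Finset.univ.gcd v = 1) :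
    Function.Surjective (dotHom v) := by
  obtain ⟨a, ha⟩ := Int.subgroup_cyclic (dotHom v).range
  have hai : ∀ i, a ∣ v i := by
    intro i
    have hvi : v i ∈ (dotHom v).range :=
      ⟨Pi.single i 1, by simp [dotHom, dotProduct_single]⟩
    rw [ha, AddSubgroup.mem_closure_singleton] at hvi
    obtain ⟨k, hk⟩ := hvi
    exact ⟨k, by rw [← hk, zsmul_eq_mul, Int.cast_id]; ring⟩
  have ha1 : a ∣ 1 := hg ▸ Finset.dvd_gcd fun i _ => hai i
  have h1mem : (1 : ℤ) ∈ (dotHom v).range := by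
    rw [ha, AddSubgroup.mem_closure_singleton]
    obtain ⟨k, hk⟩ := ha1
    exact ⟨k, by rw [zsmul_eq_mul, Int.cast_id]; linarith⟩
  obtain ⟨z₁, hz₁⟩ := h1mem
  intro t
  exact ⟨t • z₁, by rw [map_zsmul, hz₁, zsmul_eq_mul, Int.cast_id, mul_one]⟩

lemma index_S_refl {v : Fin n → ℤ} (hv : v ≠ 0) (hg : Finset.univ.gcd v = 1)
    {r : ℤ} (hr : r = if Odd (∑ i, v i * v i) then ∑ i, v i * v i
      else (∑ i, v i * v i) / 2) :
    (S (reflMat v)).index = r.toNat := by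
  have hm := m_pos hv
  have hrpos := r_pos hm hr
  have hρr : ((r.toNat : ℤ)) = r := Int.toNat_of_nonneg hrpos.le
  set ρ := r.toNat with hρ
  let ψ : (Fin n → ℤ) →+ ZMod ρ := (Int.castAddHom (ZMod ρ)).comp (dotHom v)
  have hker : S (reflMat v) = ψ.ker := by
    ext z
    rw [mem_S_refl hv hg z, AddMonoidHom.mem_ker,
      show ψ z = ((v ⬝ᵥ z : ℤ) : ZMod ρ) from rfl,
      ZMod.intCast_zmod_eq_zero_iff_dvd, hρr]
    exact m_dvd_two_mul_iff hm hr (v ⬝ᵥ z)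
  have hsurj : Function.Surjective ψ := by
    intro x
    obtain ⟨y, hy⟩ := ZMod.intCast_surjective x
    obtain ⟨z, hz⟩ := dotHom_surj hg y
    refine ⟨z, ?_⟩
    show ((dotHom v z : ℤ) : ZMod ρ) = x
    rw [hz, hy]
  rw [hker, AddSubgroup.index_ker, AddMonoidHom.range_eq_top.mpr hsurj]
  rw [Nat.card_congr AddSubgroup.topEquiv.toEquiv]
  exact Nat.card_zmod ρ


lemma prod_mul_reverse_prod {M : Type*} [Monoid M] :
    ∀ l : List M, (∀ x ∈ l, x * x = 1) → l.prod * l.reverse.prod = 1 := by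
  intro l
  induction l with
  | nil => simp
  | cons a t ih =>
    intro h
    have h1 : t.prod * t.reverse.prod = 1 := ih fun x hx => h x (List.mem_cons_of_mem a hx)
    have h2 : a * a = 1 := h a List.mem_cons_self
    simp only [List.prod_cons, List.reverse_cons, List.prod_append, List.prod_cons,
      List.prod_nil, mul_one]
    calc a * t.prod * (t.reverse.prod * a)
        = a * (t.prod * t.reverse.prod * a) := by rw [mul_assoc, mul_assoc]
      _ = a * a := by rw [h1, one_mul]
      _ = 1 := h2

lemma ofFn_reverse {α : Type*} {k : ℕ} (f : Fin k → α) :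
    (List.ofFn f).reverse = List.ofFn (fun i => f i.rev) := by
  apply List.ext_getElem
  · simp
  · intro i h1 h2
    simp only [List.length_reverse, List.length_ofFn] at h1 h2
    rw [List.getElem_reverse, List.getElem_ofFn, List.getElem_ofFn]
    congr 1
    apply Fin.ext
    simp only [Fin.val_rev, List.length_ofFn] at h1 h2 ⊢
    omega

lemma S_one_index : (S (1 : Matrix (Fin n) (Fin n) ℚ)).index = 1 := by
  have h : S (1 : Matrix (Fin n) (Fin n) ℚ) = ⊤ := by
    rw [eq_top_iff]
    intro z _
    rw [mem_S_iff (mul_one (1 : Matrix (Fin n) (Fin n) ℚ)), Matrix.one_mulVec]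
    exact ⟨z, rfl⟩
  rw [h, AddSubgroup.index_top]

lemma key_induction : ∀ (k : ℕ) (v : Fin k → Fin n → ℤ) (r : Fin k → ℤ),
    (∀ i, v i ≠ 0) → (∀ i, Finset.univ.gcd (v i) = 1) →
    (∀ i, r i = if Odd (∑ j, v i j * v i j) then ∑ j, v i j * v i j
      else (∑ j, v i j * v i j) / 2) →
    (∀ i j, i ≠ j → IsCoprime (r i) (r j)) →
    (S ((List.ofFn fun i => reflMat (v i)).prod)).index = ∏ i, (r i).toNat := by
  intro k
  induction k with
  | zero =>
    intro v r _ _ _ _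
    simp only [List.ofFn_zero, List.prod_nil, Finset.univ_eq_empty, Finset.prod_empty]
    exact S_one_index
  | succ k ih =>
    intro v r hv hg hr hcop
    set v' : Fin k → Fin n → ℤ := fun i => v i.castSucc with hv'def
    set r' : Fin k → ℤ := fun i => r i.castSucc with hr'def
    set R : Matrix (Fin n) (Fin n) ℚ := reflMat (v (Fin.last k)) with hRdef
    set lY : List (Matrix (Fin n) (Fin n) ℚ) := List.ofFn fun i => reflMat (v' i) with hlY
    have hsplit : (List.ofFn fun i => reflMat (v i)).prod = lY.prod * R := by
      rw [List.ofFn_succ']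
      simp [hlY, List.concat_eq_append]
      rfl
    have hinv : ∀ x ∈ lY, x * x = 1 := by
      intro x hx
      rw [hlY, List.mem_ofFn] at hx
      obtain ⟨i, hi⟩ := hx
      rw [← hi]
      exact refl_mul_self (hv _)
    set Z : Matrix (Fin n) (Fin n) ℚ := lY.reverse.prod with hZdef
    have hYZ : lY.prod * Z = 1 := prod_mul_reverse_prod lY hinv
    have hZY : Z * lY.prod = 1 := mul_eq_one_comm.mp hYZ
    have hRR : R * R = 1 := refl_mul_self (hv _)
    have hposr : ∀ i, 0 < r i := fun i => r_pos (m_pos (hv i)) (hr i)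
    have hA : (S lY.prod).index = ∏ i : Fin k, (r' i).toNat :=
      ih v' r' (fun i => hv _) (fun i => hg _) (fun i => hr _)
        (fun i j hij => hcop _ _ ((Fin.castSucc_injective k).ne hij))
    have hZval : (S Z).index = ∏ i : Fin k, (r' i).toNat := by
      rw [hZdef, hlY, ofFn_reverse, ih (fun i => v' i.rev) (fun i => r' i.rev)
        (fun i => hv _) (fun i => hg _) (fun i => hr _)
        (fun i j hij => hcop _ _ ((Fin.castSucc_injective k).ne
          (Fin.rev_injective.ne hij)))]
      exact Fintype.prod_equiv Fin.revPerm _ _ (fun i => rfl)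
    have hb : (S R).index = (r (Fin.last k)).toNat := index_S_refl (hv _) (hg _) (hr _)
    -- ℕ-coprimality
    have hcopN : ∀ i j, i ≠ j → Nat.Coprime (r i).toNat (r j).toNat := by
      intro i j hij
      have h := hcop i j hij
      rw [Int.isCoprime_iff_gcd_eq_one] at h
      have hpi := hposr i
      have hpj := hposr j
      have e1 : (r i).toNat = (r i).natAbs := by omega
      have e2 : (r j).toNat = (r j).natAbs := by omega
      simpa [Nat.Coprime, Int.gcd, e1, e2] using h
    set a : ℕ := ∏ i : Fin k, (r' i).toNat with hadef
    set b : ℕ := (r (Fin.last k)).toNat with hbdef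
    set c : ℕ := (S (lY.prod * R)).index with hcdef
    have hcab : Nat.Coprime a b := by
      rw [hadef]
      exact Nat.Coprime.prod_left fun i _ =>
        hcopN i.castSucc (Fin.last k) (Fin.castSucc_lt_last i).ne
    -- c ∣ a * b
    have h1 : c ∣ a * b := by
      rw [hcdef, ← hA, ← hb]
      exact S_mul_index_dvd hYZ hRR
    -- a ∣ c * b
    have h2 : a ∣ c * b := by
      have hinv1 : lY.prod * R * (R * Z) = 1 := by
        rw [mul_assoc, ← mul_assoc R R Z, hRR, one_mul, hYZ]
      have hd := S_mul_index_dvd hinv1 hRR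
      rw [mul_assoc, hRR, mul_one] at hd
      rw [← hA] at *
      rw [← hb]
      exact hd
    -- b ∣ a * c
    have h3 : b ∣ a * c := by
      have hinv1 : lY.prod * R * (R * Z) = 1 := by
        rw [mul_assoc, ← mul_assoc R R Z, hRR, one_mul, hYZ]
      have hinv2 : Z * lY.prod = 1 := hZY
      have hd := S_mul_index_dvd (A := Z) (B := lY.prod * R)
        (W := lY.prod) (W' := R * Z) hZY hinv1
      have heq : Z * (lY.prod * R) = R := by rw [← mul_assoc, hZY, one_mul]
      rw [heq] at hd
      rw [← hb] at *
      calc (S R).index ∣ (S Z).index * c := hd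
        _ = a * c := by rw [hZval]
    have hac : a ∣ c := (Nat.Coprime.dvd_of_dvd_mul_right hcab) h2
    have hbc : b ∣ c := (Nat.Coprime.dvd_of_dvd_mul_left hcab.symm) h3
    have habc : a * b ∣ c := Nat.Coprime.mul_dvd_of_dvd_of_dvd hcab hac hbc
    have hceq : c = a * b := Nat.dvd_antisymm h1 habc
    rw [hsplit, ← hcdef, hceq, Fin.prod_univ_castSucc]

end CoincAux

theorem index_of_product_of_reflections {n k : ℕ} (v : Fin k → Fin n → ℤ)
    (hv : ∀ i, v i ≠ 0) (hgcd : ∀ i, Finset.univ.gcd (v i) = 1)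
    (r : Fin k → ℤ)
    (hr : ∀ i, r i = if Odd (∑ j, v i j * v i j) then ∑ j, v i j * v i j
      else (∑ j, v i j * v i j) / 2)
    (hcop : ∀ i j, i ≠ j → IsCoprime (r i) (r j)) :
    (coincidenceIndex ((List.ofFn fun i => reflMat (v i)).prod) : ℤ) = ∏ i, r i := by
  rw [CoincAux.coincidenceIndex_eq, CoincAux.key_induction k v r hv hgcd hr hcop]
  push_cast
  exact Finset.prod_congr rfl fun i _ =>
    Int.toNat_of_nonneg (CoincAux.r_pos (CoincAux.m_pos (hv i)) (hr i)).le
end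

section
/- Every odd positive integer can be written as a sum of four squares of integers whose gcd is 1. -/
/-!
Write `a² + b² + c² + d²` as the norm `N(q)` of the Lipschitz quaternion `q = a + bi + cj + dk`;
the gcd condition then says that no rational prime divides `q`. Peel off one odd prime
`p = N(α)` at a time: if `n = N(ρ)` with `ρ` primitive, then `α u ρ` is primitive of norm `p n`
for a suitable `u ∈ {1, i, j, k}`. A prime `r ≠ p` dividing `α u ρ` would divide
`(α u)⋆ α u ρ = p ρ`, hence `ρ`. As for `p`: if it divided `α u ρ` for all four `u`, the identity
`x - i x i - j x j - k x k = 4 re x` applied to `x = ρ y` would make it divide `4 re (ρ y) α` for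
every `y`; as `p ∤ α` (because `p² ∤ N(α)`), `p` would divide every coordinate of `ρ`.
-/

open Quaternion

namespace Quaternion

section CommRing

variable {R : Type*} [CommRing R]

@[simps] def i : ℍ[R] := ⟨0, 1, 0, 0⟩

@[simps] def j : ℍ[R] := ⟨0, 0, 1, 0⟩

@[simps] def k : ℍ[R] := ⟨0, 0, 0, 1⟩

theorem coe_four_mul_re (q : ℍ[R]) :
    ((4 * q.re : R) : ℍ[R]) = q - i * q * i - j * q * j - k * q * k := by
  ext <;> simp [re_mul, imI_mul, imJ_mul, imK_mul]; ring

theorem coe_dvd_iff {r : R} {q : ℍ[R]} :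
    (r : ℍ[R]) ∣ q ↔ r ∣ q.re ∧ r ∣ q.imI ∧ r ∣ q.imJ ∧ r ∣ q.imK := by
  constructor
  · rintro ⟨c, rfl⟩
    simp [coe_mul_eq_smul]
  · rintro ⟨⟨a, ha⟩, ⟨b, hb⟩, ⟨c, hc⟩, ⟨d, hd⟩⟩
    obtain ⟨x, rfl, rfl, rfl, rfl⟩ : ∃ x : ℍ[R], x.re = a ∧ x.imI = b ∧ x.imJ = c ∧ x.imK = d :=
      ⟨⟨a, b, c, d⟩, rfl, rfl, rfl, rfl⟩
    exact ⟨x, by ext <;> simp [coe_mul_eq_smul, *]⟩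

theorem coe_dvd_of_coe_dvd_coe_mul {r c : R} (hr : Prime r) (hc : ¬ r ∣ c) {q : ℍ[R]}
    (h : (r : ℍ[R]) ∣ c * q) : (r : ℍ[R]) ∣ q := by
  simpa only [coe_dvd_iff, coe_mul_eq_smul, re_smul, imI_smul, imJ_smul, imK_smul, smul_eq_mul,
    hr.dvd_mul, hc, false_or] using h

theorem coe_dvd_of_coe_dvd_mul {r : R} (hr : Prime r) {x y : ℍ[R]} (hx : ¬ r ∣ normSq x)
    (h : (r : ℍ[R]) ∣ x * y) : (r : ℍ[R]) ∣ y := by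
  obtain ⟨z, hz⟩ := h
  refine coe_dvd_of_coe_dvd_coe_mul hr hx ⟨star x * z, ?_⟩
  rw [← star_mul_self, mul_assoc, hz, (coe_commute r _).left_comm]

theorem exists_not_coe_dvd_mul_mul {p : R} (hp : Prime p) (h2 : ¬ p ∣ 2) {α ρ : ℍ[R]}
    (hα : ¬ (p : ℍ[R]) ∣ α) (hρ : ¬ (p : ℍ[R]) ∣ ρ) :
    ∃ u ∈ ({1, i, j, k} : Set ℍ[R]), ¬ (p : ℍ[R]) ∣ α * u * ρ := by
  by_contra! h
  simp only [Set.mem_insert_iff, Set.mem_singleton_iff, forall_eq_or_imp, forall_eq, mul_one] at h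
  obtain ⟨h1, hi, hj, hk⟩ := h
  have hre : ∀ y, p ∣ (ρ * y).re := by
    intro y
    have h4re : (p : ℍ[R]) ∣ ((4 * (ρ * y).re : R) : ℍ[R]) * α := by
      rw [(coe_commute _ α).eq, coe_four_mul_re]
      simp only [mul_sub, ← mul_assoc]
      exact (((h1.mul_right y).sub ((hi.mul_right y).mul_right i)).sub
        ((hj.mul_right y).mul_right j)).sub ((hk.mul_right y).mul_right k)
    by_contra hy
    refine hα (coe_dvd_of_coe_dvd_coe_mul hp ?_ h4re)
    rw [show (4 : R) = 2 * 2 by norm_num]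
    simp only [hp.dvd_mul, h2, hy, or_self, not_false_eq_true]
  refine hρ (coe_dvd_iff.mpr ⟨?_, ?_, ?_, ?_⟩)
  · simpa using hre 1
  · simpa [re_mul] using hre (-i)
  · simpa [re_mul] using hre (-j)
  · simpa [re_mul] using hre (-k)

end CommRing

theorem not_coe_dvd_of_normSq_eq {R : Type*} [CommRing R] [IsDomain R] {p : R} (hp : Prime p)
    {α : ℍ[R]} (hα : normSq α = p) : ¬ (p : ℍ[R]) ∣ α := by
  intro h
  have := map_dvd normSq h
  rw [normSq_coe, hα, sq] at this
  have hp1 : p ∣ 1 := (mul_dvd_mul_iff_left hp.ne_zero).mp (by simpa using this)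
  exact hp.not_isUnit (isUnit_of_dvd_one hp1)

theorem exists_normSq_eq (n : ℕ) : ∃ q : ℍ[ℤ], normSq q = n := by
  obtain ⟨a, b, c, d, h⟩ := Nat.sum_four_squares n
  exact ⟨⟨a, b, c, d⟩, (normSq_def' _).trans (by dsimp only; exact_mod_cast h)⟩

def content (q : ℍ[ℤ]) : ℕ := Int.gcd q.re (Int.gcd q.imI (Int.gcd q.imJ q.imK))

theorem dvd_content_iff {n : ℕ} {q : ℍ[ℤ]} : n ∣ q.content ↔ (n : ℍ[ℤ]) ∣ q := by
  rw [← coe_natCast, coe_dvd_iff]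
  simp [content, Int.dvd_gcd_iff, Int.natCast_dvd_natCast]

theorem content_eq_one_iff {q : ℍ[ℤ]} :
    q.content = 1 ↔ ∀ p : ℕ, p.Prime → ¬ (p : ℍ[ℤ]) ∣ q := by
  simp only [Nat.eq_one_iff_not_exists_prime_dvd, dvd_content_iff]

theorem exists_normSq_eq_one_content_mul_eq_one {p : ℕ} (hp : p.Prime) (hp2 : Odd p)
    {α ρ : ℍ[ℤ]} (hα : normSq α = p) (hρ : ρ.content = 1) :
    ∃ u : ℍ[ℤ], normSq u = 1 ∧ (α * u * ρ).content = 1 := by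
  rw [content_eq_one_iff] at hρ
  have hpZ : Prime (p : ℤ) := Nat.prime_iff_prime_int.mp hp
  have h2 : ¬ (p : ℤ) ∣ 2 := by
    intro h
    rw [(Nat.prime_dvd_prime_iff_eq hp Nat.prime_two).mp (mod_cast h)] at hp2
    exact absurd hp2 (by decide)
  obtain ⟨u, hu, hpu⟩ :=
    exists_not_coe_dvd_mul_mul hpZ h2 (not_coe_dvd_of_normSq_eq hpZ hα) (hρ p hp)
  have hu1 : normSq u = 1 := by
    rcases hu with rfl | rfl | rfl | rfl <;> simp [normSq_def']
  refine ⟨u, hu1, content_eq_one_iff.mpr fun r hr hdvd => ?_⟩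
  rcases eq_or_ne r p with rfl | hrp
  · exact hpu hdvd
  refine hρ r hr (coe_dvd_of_coe_dvd_mul (Nat.prime_iff_prime_int.mp hr) ?_ hdvd)
  rw [map_mul, hα, hu1, mul_one, Int.natCast_dvd_natCast, Nat.prime_dvd_prime_iff_eq hr hp]
  exact hrp

theorem exists_normSq_eq_content_eq_one {m : ℕ} (hm : Odd m) :
    ∃ q : ℍ[ℤ], normSq q = m ∧ q.content = 1 := by
  induction m using induction_on_primes with
  | zero => exact absurd hm (by decide)
  | one => exact ⟨1, by simp, rfl⟩
  | prime_mul p n hp ih =>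
    obtain ⟨hp2, hn⟩ := Nat.odd_mul.mp hm
    obtain ⟨ρ, hρn, hρ⟩ := ih hn
    obtain ⟨α, hα⟩ := exists_normSq_eq p
    obtain ⟨u, hu, hq⟩ := exists_normSq_eq_one_content_mul_eq_one hp hp2 hα hρ
    exact ⟨α * u * ρ, by simp [hα, hu, hρn], hq⟩

end Quaternion

theorem odd_eq_sum_four_squares_coprime_general (m : ℕ) (hodd : Odd m) :
    ∃ a b c d : ℤ, a ^ 2 + b ^ 2 + c ^ 2 + d ^ 2 = (m : ℤ) ∧
      Int.gcd a (Int.gcd b (Int.gcd c d)) = 1 := by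
  obtain ⟨q, hq, hc⟩ := Quaternion.exists_normSq_eq_content_eq_one hodd
  exact ⟨q.re, q.imI, q.imJ, q.imK, by rw [← normSq_def', hq], hc⟩

theorem odd_eq_sum_four_squares_coprime (m : ℕ) (hm : 0 < m) (hodd : Odd m) :
    ∃ a b c d : ℤ, a ^ 2 + b ^ 2 + c ^ 2 + d ^ 2 = (m : ℤ) ∧
      Int.gcd a (Int.gcd b (Int.gcd c d)) = 1 :=
  odd_eq_sum_four_squares_coprime_general m hodd
end

section
/- Every positive integer occurs as the coincidence index Σ(Y) = [ℤ⁵ : ℤ⁵ ∩ Yℤ⁵] for some rational orthogonal matrix Y ∈ O_5(ℚ). -/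
open Matrix

lemma aux_key (m : ℕ) (hm : 0 < m) (u : Fin 5 → ℤ) (hu0 : u 0 = 1)
    (huu : ∑ i, u i * u i = 2 * (m : ℤ)) :
    ∃ Y : Matrix (Fin 5) (Fin 5) ℚ, Yᵀ * Y = 1 ∧ coincidenceIndex Y = m := by
  have hm0 : (m : ℚ) ≠ 0 := Nat.cast_ne_zero.mpr hm.ne'
  set v : Fin 5 → ℚ := fun i => ((u i : ℚ)) with hv
  set A : Matrix (Fin 5) (Fin 5) ℚ := vecMulVec v v with hA
  set Y : Matrix (Fin 5) (Fin 5) ℚ := 1 - ((m : ℚ))⁻¹ • A with hY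
  have hvv5 : v 0 * v 0 + v 1 * v 1 + v 2 * v 2 + v 3 * v 3 + v 4 * v 4 = 2 * (m : ℚ) := by
    have h := congrArg (fun z : ℤ => (z : ℚ)) huu
    push_cast [Fin.sum_univ_five] at h
    simpa [hv] using h
  have hAA : A * A = (2 * (m : ℚ)) • A := by
    ext i j
    simp only [hA, mul_apply, vecMulVec_apply, Fin.sum_univ_five, Matrix.smul_apply, smul_eq_mul]
    linear_combination (v i * v j) * hvv5
  have hAT : Aᵀ = A := by
    ext i j; simp [hA, vecMulVec_apply, mul_comm]
  have hYT : Yᵀ = Y := by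
    rw [hY, transpose_sub, transpose_one, transpose_smul, hAT]
  have hY2 : Y * Y = 1 := by
    have hBB2 : ((m : ℚ)⁻¹ • A) * ((m : ℚ)⁻¹ • A) = (m : ℚ)⁻¹ • A + (m : ℚ)⁻¹ • A := by
      rw [Matrix.smul_mul, Matrix.mul_smul, hAA, smul_smul, smul_smul, ← add_smul]
      congr 1
      field_simp
      ring
    rw [hY, mul_sub, mul_one, sub_mul, one_mul, hBB2]
    abel
  have hYtY : Yᵀ * Y = 1 := by rw [hYT, hY2]
  have hAmv : ∀ x : Fin 5 → ℚ, A.mulVec x = (v ⬝ᵥ x) • v := by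
    intro x
    ext j
    simp only [hA, mulVec, dotProduct, vecMulVec_apply, Fin.sum_univ_five, Pi.smul_apply,
      smul_eq_mul]
    ring
  have hmv : ∀ x : Fin 5 → ℚ, Y.mulVec x = x - ((m : ℚ)⁻¹ * (v ⬝ᵥ x)) • v := by
    intro x
    rw [hY, sub_mulVec, one_mulVec, smul_mulVec, hAmv, smul_smul]
  have hYinv : ∀ x : Fin 5 → ℚ, Y.mulVec (Y.mulVec x) = x := by
    intro x
    rw [mulVec_mulVec, hY2, one_mulVec]
  set K : AddSubgroup (Fin 5 → ℚ) := intLattice 5 with hK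
  set H : AddSubgroup (Fin 5 → ℚ) :=
    AddSubgroup.map (Matrix.mulVecLin Y).toAddMonoidHom (intLattice 5) with hH
  have hmemH : ∀ x : Fin 5 → ℚ, x ∈ H ↔ ∃ z : Fin 5 → ℤ, Y.mulVec (fun i => (z i : ℚ)) = x := by
    intro x
    constructor
    · rintro ⟨y, ⟨z, rfl⟩, hy⟩
      exact ⟨z, hy⟩
    · rintro ⟨z, hz⟩
      exact ⟨fun i => (z i : ℚ), ⟨z, rfl⟩, hz⟩
  have hdot : ∀ z : Fin 5 → ℤ, v ⬝ᵥ (fun i => (z i : ℚ)) = ((∑ i, u i * z i : ℤ) : ℚ) := by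
    intro z
    push_cast [dotProduct]
    rfl
  -- characterization of membership in H for integer vectors
  have hchar : ∀ z : Fin 5 → ℤ,
      ((fun i => (z i : ℚ)) ∈ H) ↔ (m : ℤ) ∣ ∑ i, u i * z i := by
    intro z
    rw [hmemH]
    constructor
    · rintro ⟨w, hw⟩
      have h2 : Y.mulVec (fun i => (w i : ℚ)) = (fun i => (z i : ℚ)) := hw
      have h3 : (fun i => (w i : ℚ)) = Y.mulVec (fun i => (z i : ℚ)) := by
        rw [← h2, hYinv]
      rw [hmv, hdot] at h3
      set T : ℚ := ((∑ i, u i * z i : ℤ) : ℚ) with hT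
      have h4 := congrFun h3 0
      simp only [Pi.sub_apply, Pi.smul_apply, smul_eq_mul] at h4
      have hv0 : v 0 = 1 := by simp [hv, hu0]
      rw [hv0, mul_one] at h4
      -- h4 : (w 0 : ℚ) = z 0 - (m)⁻¹ * T
      refine ⟨z 0 - w 0, ?_⟩
      have h5 : T = (m : ℚ) * ((z 0 : ℚ) - (w 0 : ℚ)) := by
        field_simp at h4
        linarith
      have h6 : ((∑ i, u i * z i : ℤ) : ℚ) = (((m : ℤ) * (z 0 - w 0) : ℤ) : ℚ) := by
        rw [← hT, h5]; push_cast; ring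
      exact_mod_cast h6
    · rintro ⟨t, ht⟩
      refine ⟨fun i => z i - t * u i, ?_⟩
      have hYz : Y.mulVec (fun i => (z i : ℚ)) = (fun i => ((z i - t * u i : ℤ) : ℚ)) := by
        have hct : (m : ℚ)⁻¹ * (((m : ℤ) * t : ℤ) : ℚ) = (t : ℚ) := by
          push_cast; field_simp
        rw [hmv, hdot, ht]
        funext i
        simp only [Pi.sub_apply, Pi.smul_apply, smul_eq_mul, hct, hv]
        push_cast
        ring
      have : Y.mulVec (fun i => ((z i - t * u i : ℤ) : ℚ)) =
          Y.mulVec (Y.mulVec (fun i => (z i : ℚ))) := by rw [hYz]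
      rw [this, hYinv]
  -- the homomorphism from the lattice onto ZMod m
  let g : (Fin 5 → ℤ) →+ ↥K := by
    refine AddMonoidHom.mk' (fun z => ⟨fun i => (z i : ℚ), ⟨z, rfl⟩⟩) ?_
    intro x y
    ext i
    push_cast
    simp
  have hgsurj : Function.Surjective g := by
    rintro ⟨x, z, rfl⟩
    exact ⟨z, rfl⟩
  have hginj : Function.Injective g := by
    intro x y hxy
    funext i
    have h : ((x i : ℚ)) = ((y i : ℚ)) := congrFun (congrArg Subtype.val hxy) i
    exact_mod_cast h
  let E : (Fin 5 → ℤ) ≃+ ↥K := AddEquiv.ofBijective g ⟨hginj, hgsurj⟩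
  have hE : ∀ z, E z = g z := fun z => rfl
  let ψ : (Fin 5 → ℤ) →+ ZMod m := by
    refine AddMonoidHom.mk' (fun z => ((∑ i, u i * z i : ℤ) : ZMod m)) ?_
    intro x y
    push_cast [Pi.add_apply, mul_add, Finset.sum_add_distrib]
    ring
  let f : ↥K →+ ZMod m := ψ.comp E.symm.toAddMonoidHom
  have hfg : ∀ z : Fin 5 → ℤ, f (g z) = ((∑ i, u i * z i : ℤ) : ZMod m) := by
    intro z
    have : E.symm (g z) = z := by
      rw [← hE]; exact E.symm_apply_apply z
    simp only [f, AddMonoidHom.comp_apply, AddEquiv.coe_toAddMonoidHom, this]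
    rfl
  have hfsurj : Function.Surjective f := by
    intro c
    obtain ⟨n, rfl⟩ := ZMod.intCast_surjective c
    refine ⟨g ![n, 0, 0, 0, 0], ?_⟩
    rw [hfg]
    congr 1
    simp [Fin.sum_univ_five, hu0]
  have hker : f.ker = H.addSubgroupOf K := by
    ext x
    obtain ⟨z, rfl⟩ := hgsurj x
    rw [AddMonoidHom.mem_ker, hfg, AddSubgroup.mem_addSubgroupOf,
      ZMod.intCast_zmod_eq_zero_iff_dvd]
    exact (hchar z).symm
  refine ⟨Y, hYtY, ?_⟩
  have : coincidenceIndex Y = (H.addSubgroupOf K).index := rfl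
  rw [this, ← hker, AddSubgroup.index_ker, AddMonoidHom.range_eq_top.mpr hfsurj,
    AddSubgroup.card_top, Nat.card_zmod]

theorem every_index_occurs_dim_five (m : ℕ) (hm : 0 < m) :
    ∃ Y : Matrix (Fin 5) (Fin 5) ℚ, Yᵀ * Y = 1 ∧ coincidenceIndex Y = m := by
  obtain ⟨a, b, c, d, habcd⟩ := Nat.sum_four_squares (2 * m - 1)
  refine aux_key m hm ![1, a, b, c, d] rfl ?_
  have h1 : (1 : ℕ) ≤ 2 * m := by omega
  have : ((a : ℤ))^2 + b^2 + c^2 + d^2 = 2 * m - 1 := by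
    have := congrArg (fun z : ℕ => (z : ℤ)) habcd
    push_cast [Nat.cast_sub h1] at this
    linarith [this]
  simp [Fin.sum_univ_five]
  nlinarith [this]
end

section
/- Two lattices L₁ = A₁ℤⁿ and L₂ = A₂ℤⁿ in ℝⁿ (with A₁, A₂ nonsingular real n×n matrices) satisfy [L₁ : L₁ ∩ L₂] < ∞ and [L₂ : L₁ ∩ L₂] < ∞ if and only if A₂⁻¹A₁ is a rational matrix. -/
open Matrix

/-- The lattice A·ℤⁿ in ℝⁿ with structure matrix A. -/
def latticeOf {n : ℕ} (A : Matrix (Fin n) (Fin n) ℝ) : AddSubgroup (Fin n → ℝ) :=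
  AddSubgroup.map (Matrix.mulVecLin A).toAddMonoidHom
    { carrier := Set.range (fun z : Fin n → ℤ => fun i => (z i : ℝ))
      add_mem' := by rintro a b ⟨x, rfl⟩ ⟨y, rfl⟩; exact ⟨x + y, by funext i; simp⟩
      zero_mem' := ⟨0, by funext i; simp⟩
      neg_mem' := by rintro a ⟨x, rfl⟩; exact ⟨-x, by funext i; simp⟩ }

lemma latticeOf_mem {n : ℕ} (A : Matrix (Fin n) (Fin n) ℝ) (z : Fin n → ℤ) :
    A.mulVec (fun i => (z i : ℝ)) ∈ latticeOf A :=
  ⟨(fun i => (z i : ℝ)), ⟨z, rfl⟩, by simp [Matrix.mulVecLin_apply]⟩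

lemma latticeOf_mem_iff {n : ℕ} {A : Matrix (Fin n) (Fin n) ℝ} {x : Fin n → ℝ} :
    x ∈ latticeOf A ↔ ∃ z : Fin n → ℤ, A.mulVec (fun i => (z i : ℝ)) = x := by
  constructor
  · rintro ⟨v, ⟨z, rfl⟩, h⟩
    exact ⟨z, by simpa [Matrix.mulVecLin_apply] using h⟩
  · rintro ⟨z, rfl⟩
    exact latticeOf_mem A z

/-- Forward direction core. -/
lemma grimmer_forward {n : ℕ} (A₁ A₂ : Matrix (Fin n) (Fin n) ℝ) (h₂ : IsUnit A₂.det)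
    (h : AddSubgroup.relIndex (latticeOf A₂) (latticeOf A₁) ≠ 0) :
    ∀ i j, ∃ p : ℚ, (A₂⁻¹ * A₁) i j = (p : ℝ) := by
  intro i j
  set m : ℕ := AddSubgroup.relIndex (latticeOf A₂) (latticeOf A₁) with hm
  set u : Fin n → ℝ := fun i => (((Pi.single j 1 : Fin n → ℤ) i : ℤ) : ℝ) with hu
  have hu' : u = Pi.single j (1 : ℝ) := by
    funext k
    simp [hu, Pi.single_apply, apply_ite (fun t : ℤ => (t : ℝ))]
  have hgmem : A₁.mulVec u ∈ latticeOf A₁ := latticeOf_mem A₁ (Pi.single j 1)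
  set g : latticeOf A₁ := ⟨A₁.mulVec u, hgmem⟩ with hg
  have hsm : m • g ∈ (latticeOf A₂).addSubgroupOf (latticeOf A₁) :=
    AddSubgroup.nsmul_index_mem _ g
  have hsm' : m • A₁.mulVec u ∈ latticeOf A₂ := by
    have := (AddSubgroup.mem_addSubgroupOf).mp hsm
    simpa using this
  obtain ⟨z, hz⟩ := latticeOf_mem_iff.mp hsm'
  have key : (fun i => (z i : ℝ)) = m • ((A₂⁻¹ * A₁).mulVec u) := by
    have h' := congrArg (fun v => A₂⁻¹.mulVec v) hz
    rw [Matrix.mulVec_mulVec, Matrix.nonsing_inv_mul A₂ h₂, Matrix.one_mulVec,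
      Matrix.mulVec_smul, Matrix.mulVec_mulVec] at h'
    exact h'
  have hmne : (m : ℝ) ≠ 0 := by exact_mod_cast h
  have hkey := congrFun key i
  rw [hu'] at hkey
  simp only [Matrix.mulVec_single, MulOpposite.op_one, one_smul, Matrix.col_apply, mul_one, Pi.smul_apply, nsmul_eq_mul] at hkey
  refine ⟨(z i : ℚ) / (m : ℚ), ?_⟩
  push_cast
  rw [eq_div_iff hmne, mul_comm]
  exact hkey.symm

lemma map_inv_ratCast {n : ℕ} (Q : Matrix (Fin n) (Fin n) ℚ) :
    ((Rat.castHom ℝ).mapMatrix Q)⁻¹ = (Rat.castHom ℝ).mapMatrix Q⁻¹ := by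
  rw [Matrix.inv_def, Matrix.inv_def, ← RingHom.map_adjugate, ← RingHom.map_det]
  ext i j
  simp [Ring.inverse_eq_inv']

/-- Backward direction core. -/
lemma grimmer_backward {n : ℕ} (A₁ A₂ : Matrix (Fin n) (Fin n) ℝ)
    (h₁ : IsUnit A₁.det) (h₂ : IsUnit A₂.det)
    (hp : ∀ i j, ∃ p : ℚ, (A₂⁻¹ * A₁) i j = (p : ℝ)) :
    AddSubgroup.relIndex (latticeOf A₂) (latticeOf A₁) ≠ 0 := by
  classical
  set B := A₂⁻¹ * A₁ with hB
  choose Q hQ using hp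
  set d : ℕ := ∏ i : Fin n, ∏ j : Fin n, (Q i j).den with hd
  have hdpos : 0 < d := by
    apply Finset.prod_pos
    intro i _
    apply Finset.prod_pos
    intro j _
    exact (Q i j).pos
  have hdvd : ∀ i j, (Q i j).den ∣ d := by
    intro i j
    exact dvd_trans (Finset.dvd_prod_of_mem (fun j => (Q i j).den) (Finset.mem_univ j))
      (Finset.dvd_prod_of_mem (fun i => ∏ j : Fin n, (Q i j).den) (Finset.mem_univ i))
  have hint : ∀ i j, ∃ mij : ℤ, (mij : ℚ) = (d : ℚ) * Q i j := by
    intro i j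
    obtain ⟨k, hk⟩ := hdvd i j
    refine ⟨(k : ℤ) * (Q i j).num, ?_⟩
    have hden : ((Q i j).den : ℚ) ≠ 0 := by
      exact_mod_cast (Q i j).den_nz
    have h0 : ((Q i j).num : ℚ) = Q i j * ((Q i j).den : ℚ) :=
      (div_eq_iff hden).mp (Rat.num_div_den (Q i j))
    rw [hk]
    push_cast
    rw [h0]
    ring
  choose M hM using hint
  set MM : Matrix (Fin n) (Fin n) ℤ := Matrix.of M with hMM
  have hMR : ∀ i j, ((MM i j : ℝ)) = (d : ℝ) * B i j := by
    intro i j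
    have := congrArg (fun q : ℚ => (q : ℝ)) (hM i j)
    push_cast at this
    rw [hQ i j]
    exact_mod_cast this
  have hA₂B : A₂ * B = A₁ := by
    rw [hB, ← mul_assoc, Matrix.mul_nonsing_inv A₂ h₂, one_mul]
  have hkey : ∀ z : Fin n → ℤ, (∀ i, (d : ℤ) ∣ z i) →
      A₁.mulVec (fun i => (z i : ℝ)) ∈ latticeOf A₂ := by
    intro z hz
    choose w hw using hz
    have hzw : (fun i => (z i : ℝ)) = (d : ℝ) • (fun i => (w i : ℝ)) := by
      funext i
      simp only [Pi.smul_apply, smul_eq_mul]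
      rw [hw i]
      push_cast
      ring
    have : A₁.mulVec (fun i => (z i : ℝ)) =
        A₂.mulVec (fun i => ((MM.mulVec w) i : ℝ)) := by
      have hcast : (fun i => ((MM.mulVec w) i : ℝ)) =
          (MM.map (Int.cast : ℤ → ℝ)).mulVec (fun i => (w i : ℝ)) := by
        funext i
        rw [show ((MM.mulVec w) i : ℝ) = (Int.castRingHom ℝ) ((MM.mulVec w) i) from rfl]
        rw [RingHom.map_mulVec]
        rfl
      rw [hcast, Matrix.mulVec_mulVec]
      have hAM : A₂ * MM.map (Int.cast : ℤ → ℝ) = (d : ℝ) • A₁ := by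
        have hMB : MM.map (Int.cast : ℤ → ℝ) = (d : ℝ) • B := by
          ext i j
          simp [Matrix.map_apply, hMR i j]
        rw [hMB, Matrix.mul_smul, hA₂B]
      rw [hAM, hzw, Matrix.smul_mulVec, Matrix.mulVec_smul]
    rw [this]
    exact latticeOf_mem A₂ (MM.mulVec w)
  haveI : NeZero d := ⟨hdpos.ne'⟩
  set H := (latticeOf A₂).addSubgroupOf (latticeOf A₁) with hH
  have hfin : Finite ((latticeOf A₁) ⧸ H) := by
    apply Finite.of_surjective (fun c : Fin n → ZMod d =>
      (QuotientAddGroup.mk ⟨A₁.mulVec (fun i => (((c i).val : ℤ) : ℝ)),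
        latticeOf_mem A₁ (fun i => ((c i).val : ℤ))⟩ : (latticeOf A₁) ⧸ H))
    intro q
    induction q using QuotientAddGroup.induction_on with
    | H x =>
      obtain ⟨z, hz⟩ := latticeOf_mem_iff.mp x.2
      refine ⟨fun i => ((z i : ZMod d)), ?_⟩
      rw [QuotientAddGroup.eq]
      rw [hH, AddSubgroup.mem_addSubgroupOf]
      have hdiff : ∀ i, (d : ℤ) ∣ (z i - (((z i : ZMod d)).val : ℤ)) := by
        intro i
        rw [← ZMod.intCast_zmod_eq_zero_iff_dvd]
        push_cast
        rw [ZMod.natCast_rightInverse (z i : ZMod d), sub_self]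
      have h' := hkey (fun i => z i - (((z i : ZMod d)).val : ℤ)) hdiff
      have ev : (fun i => ((z i - (((z i : ZMod d)).val : ℤ) : ℤ) : ℝ))
          = (fun i => (z i : ℝ)) - (fun i => ((((z i : ZMod d)).val : ℤ) : ℝ)) := by
        funext i
        simp only [Pi.sub_apply]
        push_cast
        ring
      rw [ev, Matrix.mulVec_sub, hz] at h'
      have hcoe : ((-(⟨A₁.mulVec (fun i => ((((z i : ZMod d)).val : ℤ) : ℝ)),
          latticeOf_mem A₁ (fun i => (((z i : ZMod d)).val : ℤ))⟩ : latticeOf A₁) + x :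
          latticeOf A₁) : Fin n → ℝ)
          = x.1 - A₁.mulVec (fun i => ((((z i : ZMod d)).val : ℤ) : ℝ)) := by
        simp [neg_add_eq_sub]
      rw [hcoe]
      exact h'
  rw [AddSubgroup.relIndex]
  exact AddSubgroup.index_ne_zero_of_finite

theorem grimmer_commensurate_iff_rational {n : ℕ}
    (A₁ A₂ : Matrix (Fin n) (Fin n) ℝ) (h₁ : IsUnit A₁.det) (h₂ : IsUnit A₂.det) :
    (AddSubgroup.relIndex (latticeOf A₂) (latticeOf A₁) ≠ 0 ∧
        AddSubgroup.relIndex (latticeOf A₁) (latticeOf A₂) ≠ 0) ↔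
      ∀ i j, ∃ p : ℚ, (A₂⁻¹ * A₁) i j = (p : ℝ) := by
  constructor
  · rintro ⟨h, -⟩
    exact grimmer_forward A₁ A₂ h₂ h
  · intro hp
    refine ⟨grimmer_backward A₁ A₂ h₁ h₂ hp, ?_⟩
    apply grimmer_backward A₂ A₁ h₂ h₁
    classical
    choose Q hQ using hp
    set QM : Matrix (Fin n) (Fin n) ℚ := Matrix.of Q with hQM
    have hBQ : A₂⁻¹ * A₁ = (Rat.castHom ℝ).mapMatrix QM := by
      ext i j
      simpa [hQM] using hQ i j
    have hinv : A₁⁻¹ * A₂ = (Rat.castHom ℝ).mapMatrix QM⁻¹ := by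
      have h1 : (A₂⁻¹ * A₁)⁻¹ = A₁⁻¹ * A₂ := by
        rw [Matrix.mul_inv_rev, Matrix.nonsing_inv_nonsing_inv A₂ h₂]
      rw [← h1, hBQ, map_inv_ratCast]
    intro i j
    refine ⟨QM⁻¹ i j, ?_⟩
    rw [hinv]
    simp [RingHom.mapMatrix_apply, Matrix.map_apply]
end

section
/- Let v ∈ ℤⁿ be nonzero with coprime coordinates and suppose a prime p divides every entry of the i-th row of (v^Tv)I − 2vv^T (divided by 2 if v^Tv is even). Then p divides a_i, the i-th coordinate of v. -/
open Matrix

theorem prime_dvd_row_gcd_imp_dvd_coord {n : ℕ} (v : Fin n → ℤ) (hv : v ≠ 0)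
    (hgcd : Finset.univ.gcd v = 1) (p : ℕ) (hp : p.Prime) (i : Fin n)
    (hrow : ∀ j : Fin n,
      (p : ℤ) ∣ (if Odd (∑ k, v k * v k) then
          ((∑ k, v k * v k) • (1 : Matrix (Fin n) (Fin n) ℤ) - 2 • Matrix.vecMulVec v v) i j
        else
          ((∑ k, v k * v k) • (1 : Matrix (Fin n) (Fin n) ℤ) - 2 • Matrix.vecMulVec v v) i j / 2)) :
    (p : ℤ) ∣ v i := by
  by_contra hpi
  have hpZ : Prime (p : ℤ) := Int.prime_iff_natAbs_prime.mpr (by simpa using hp)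
  set S : ℤ := ∑ k, v k * v k with hS
  have hentry : ∀ j, ((S • (1 : Matrix (Fin n) (Fin n) ℤ) - 2 • Matrix.vecMulVec v v) i j)
      = (if i = j then S else 0) - 2 * (v i * v j) := by
    intro j
    simp only [Matrix.sub_apply, Matrix.smul_apply, Matrix.vecMulVec_apply, Matrix.one_apply]
    simp only [smul_eq_mul, nsmul_eq_mul, mul_ite, mul_one, mul_zero]
    split <;> push_cast <;> ring
  have hdiag : (p : ℤ) ∣ S - 2 * (v i * v i) := by
    have h := hrow i
    rw [hentry i] at h
    by_cases hodd : Odd S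
    · rw [if_pos hodd, if_pos rfl] at h; exact h
    · rw [if_neg hodd, if_pos rfl] at h
      obtain ⟨c, hc⟩ := Int.not_odd_iff_even.mp hodd
      have h2 : (2 : ℤ) ∣ S - 2 * (v i * v i) := ⟨c - v i * v i, by omega⟩
      have hcan := Int.ediv_mul_cancel h2
      obtain ⟨d, hd⟩ := h
      exact ⟨d * 2, by rw [show ((p : ℤ)) * (d * 2) = ((p : ℤ) * d) * 2 by ring, ← hd, hcan]⟩
  have hoff : ∀ j, j ≠ i → (p : ℤ) ∣ v j := by
    intro j hji
    have hij : i ≠ j := fun h => hji h.symm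
    have h := hrow j
    rw [hentry j, if_neg hij] at h
    have h1 : (p : ℤ) ∣ v i * v j := by
      by_cases hodd : Odd S
      · rw [if_pos hodd] at h
        have h2 : (p : ℤ) ∣ 2 * (v i * v j) := by
          have := (dvd_neg).mpr h
          simpa using this
        rcases hpZ.dvd_mul.mp h2 with h3 | h3
        · exfalso
          have hp2 : p ∣ 2 := by exact_mod_cast h3
          have hpe : p = 2 := (Nat.prime_dvd_prime_iff_eq hp Nat.prime_two).mp hp2
          have hdiag2 : (2 : ℤ) ∣ S - 2 * (v i * v i) := by
            rw [hpe] at hdiag; exact_mod_cast hdiag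
          obtain ⟨c, hc⟩ := hdiag2
          have : Even S := ⟨v i * v i + c, by omega⟩
          exact ((Int.not_odd_iff_even.mpr this)) hodd
        · exact h3
      · rw [if_neg hodd] at h
        have heq : (0 - 2 * (v i * v j)) / 2 = -(v i * v j) := by omega
        rw [heq] at h
        exact (dvd_neg).mp h
    rcases hpZ.dvd_mul.mp h1 with h3 | h3
    · exact absurd h3 hpi
    · exact h3
  have hsum : (p : ℤ) ∣ S - v i * v i := by
    have heq : S - v i * v i = ∑ j ∈ Finset.univ.erase i, v j * v j := by
      rw [hS, ← Finset.sum_erase_add Finset.univ _ (Finset.mem_univ i)]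
      ring
    rw [heq]
    exact Finset.dvd_sum fun j hj =>
      Dvd.dvd.mul_right (hoff j (Finset.ne_of_mem_erase hj)) _
  have hfin : (p : ℤ) ∣ v i * v i := by
    have hd := dvd_sub hsum hdiag
    have heq : S - v i * v i - (S - 2 * (v i * v i)) = v i * v i := by ring
    rwa [heq] at hd
  exact hpi (hpZ.dvd_mul.mp hfin |>.elim id id)
end
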